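/- arXiv:2209.07454 — 9 statements merged into one kernel-verified Lean document; each statement's English description precedes it below -/
import Mathlib

section
/- Let X be a measurable space, Ξ the set of probability measures on X, f : X → ℝ measurable with values in [0,1], and g : X → ℝ^m measurable with each component taking values in [−1,1]. If d_g > 0, then strong duality holds for the mixture-relaxed program: sup_{ξ∈Ξ} inf_{λ∈ℝ^m_{≥0}} L_{f,g}(ξ,λ) = inf_{λ∈ℝ^m_{≥0}} sup_{ξ∈Ξ} L_{f,g}(ξ,λ) = OPT_{f,g}. -/
/-!
Mixing probability measures mixes the values `(g(ξ), f(ξ))`, so the set `K` of these values is a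
convex subset of `ℝ^m × ℝ`. The open convex set `K + (ℝ^m_{>0} × ℝ_{<0})` misses `(0, OPT)`;
a separating functional, normalised on the `ℝ` factor, has coefficients `λ ≥ 0` with
`L(ξ, λ) ≤ OPT` for all `ξ`. The normalisation is possible because of the Slater point supplied by
`d_g > 0`. Together with weak duality this gives `inf_λ sup_ξ L = OPT`. The other equality needs no
convexity: `inf_λ L(ξ, λ)` is `f(ξ)` for feasible `ξ` and `-∞` otherwise.
-/

open MeasureTheory

/-- The Lagrangian `L_{f,g}(ξ,λ) = f(ξ) - ⟨λ, g(ξ)⟩`, where `h(ξ) = ∫ h dξ`. -/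
noncomputable def lagrangian {X : Type} [MeasurableSpace X] {m : ℕ}
    (f : X → ℝ) (g : Fin m → X → ℝ) (ξ : ProbabilityMeasure X) (l : Fin m → ℝ) : ℝ :=
  (∫ y, f y ∂(ξ : Measure X)) - ∑ i, l i * ∫ y, g i y ∂(ξ : Measure X)

/-- `OPT_{f,g} = sup { f(ξ) : ξ ∈ Ξ, g_i(ξ) ≤ 0 ∀ i }`. -/
noncomputable def OPTval {X : Type} [MeasurableSpace X] {m : ℕ}
    (f : X → ℝ) (g : Fin m → X → ℝ) : ℝ :=
  sSup {r : ℝ | ∃ ξ : ProbabilityMeasure X,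
    (∀ i, ∫ y, g i y ∂(ξ : Measure X) ≤ 0) ∧ r = ∫ y, f y ∂(ξ : Measure X)}

/-- `d_g = sup_{ξ∈Ξ} min_{i∈[m]} (−g_i(ξ))`. -/
noncomputable def dgval {X : Type} [MeasurableSpace X] {m : ℕ}
    (g : Fin m → X → ℝ) : ℝ :=
  sSup {r : ℝ | ∃ ξ : ProbabilityMeasure X, r = ⨅ i, -(∫ y, g i y ∂(ξ : Measure X))}

open Set Pointwise

lemma nonpos_of_forall_add_mul_le {a b k : ℝ} (h : ∀ t : ℝ, 0 < t → a + t * k ≤ b) : k ≤ 0 := by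
  by_contra! hk
  have key := h ((|b - a| + 1) / k) (by positivity)
  rw [div_mul_cancel₀ _ hk.ne'] at key
  linarith [le_abs_self (b - a)]

lemma ContinuousLinearMap.apply_pi_prod {ι : Type*} [Fintype ι] [DecidableEq ι]
    (φ : (ι → ℝ) × ℝ →L[ℝ] ℝ) (p : (ι → ℝ) × ℝ) :
    φ p = ∑ i, p.1 i * φ (Pi.single i 1, 0) + p.2 * φ (0, 1) := by
  have hsplit : p = (∑ i, p.1 i • ((Pi.single i 1 : ι → ℝ), (0 : ℝ))) + p.2 • (0, 1) := by
    ext <;> simp [Prod.fst_sum, Prod.snd_sum, Finset.sum_apply, Pi.single_apply]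
  conv_lhs => rw [hsplit, map_add, map_sum]
  simp only [map_smul, smul_eq_mul]

def slackCone (ι : Type*) : Set ((ι → ℝ) × ℝ) := univ.pi (fun _ => Ioi 0) ×ˢ Iio 0

section SlackCone

variable {ι : Type*}

lemma convex_slackCone : Convex ℝ (slackCone ι) :=
  (convex_pi fun _ _ => convex_Ioi 0).prod (convex_Iio 0)

lemma closure_slackCone : closure (slackCone ι) = Ici 0 ×ˢ Iic 0 := by
  simp only [slackCone, closure_prod_eq, closure_pi_set, closure_Ioi, closure_Iio, pi_univ_Ici]
  rfl

variable [Fintype ι]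

lemma isOpen_slackCone : IsOpen (slackCone ι) :=
  (isOpen_set_pi finite_univ fun _ _ => isOpen_Ioi).prod isOpen_Iio

lemma exists_separating_functional {K : Set ((ι → ℝ) × ℝ)} (hK : Convex ℝ K) (hK₀ : K.Nonempty)
    {x : (ι → ℝ) × ℝ} (hx : x ∉ K + slackCone ι) :
    ∃ φ : (ι → ℝ) × ℝ →L[ℝ] ℝ, (∀ q ∈ K, ∀ c ∈ slackCone ι, φ (q + c) < φ x) ∧
      (∀ q ∈ K, φ q ≤ φ x) ∧ ∀ c ∈ closure (slackCone ι), φ c ≤ 0 := by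
  obtain ⟨φ, hφ⟩ :=
    geometric_hahn_banach_open_point (hK.add convex_slackCone) isOpen_slackCone.add_left hx
  have hφC : ∀ q ∈ K, ∀ c ∈ closure (slackCone ι), φ q + φ c ≤ φ x := by
    intro q hq
    refine (isClosed_le (continuous_const.add φ.continuous) continuous_const).closure_subset_iff.2
      fun c hc => ?_
    simpa using (hφ (q + c) (add_mem_add hq hc)).le
  obtain ⟨q₀, hq₀⟩ := hK₀
  refine ⟨φ, fun q hq c hc => hφ _ (add_mem_add hq hc),
    fun q hq => by simpa using hφC q hq 0 (by simp [closure_slackCone]), fun c hc => ?_⟩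
  -- `closure (slackCone ι)` is a cone, so `φ q₀ + t * φ c ≤ φ x` for every `t > 0`.
  refine nonpos_of_forall_add_mul_le (a := φ q₀) (b := φ x) fun t ht => ?_
  have htc : t • c ∈ closure (slackCone ι) := by
    rw [closure_slackCone] at hc ⊢
    exact ⟨mem_Ici.2 (smul_nonneg ht.le hc.1),
      mem_Iic.2 (smul_nonpos_of_nonneg_of_nonpos ht.le hc.2)⟩
  simpa using hφC q₀ hq₀ (t • c) htc

theorem exists_lagrange_multiplier {K : Set ((ι → ℝ) × ℝ)} (hK : Convex ℝ K)
    (hslater : ∃ q ∈ K, ∀ i, q.1 i < 0) {A : ℝ} (hA : ∀ q ∈ K, (∀ i, q.1 i ≤ 0) → q.2 ≤ A) :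
    ∃ l : ι → ℝ, (∀ i, 0 ≤ l i) ∧ ∀ q ∈ K, q.2 - ∑ i, l i * q.1 i ≤ A := by
  classical
  obtain ⟨q₀, hq₀, hq₀neg⟩ := hslater
  have hnot : ((0 : ι → ℝ), A) ∉ K + slackCone ι := by
    rintro ⟨q, hq, c, ⟨hc₁, hc₂⟩, hqc⟩
    obtain rfl : q = (0, A) - c := eq_sub_of_add_eq hqc
    have := hA _ hq fun i => by simpa using (hc₁ i (mem_univ i)).le
    simp only [Prod.snd_sub, mem_Iio] at this hc₂
    linarith
  obtain ⟨φ, hφ, hφK, hφC⟩ := exists_separating_functional hK ⟨q₀, hq₀⟩ hnot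
  set τ := φ (0, 1)
  -- Slater: `q₀ + (-q₀.1, -1) = (0, q₀.2 - 1)` with `q₀.2 - 1 < A`, so `τ` cannot vanish.
  have hτ : 0 < τ := by
    have := hφ q₀ hq₀ (-q₀.1, -1) ⟨fun i _ => by simpa using hq₀neg i, by simp⟩
    rw [φ.apply_pi_prod, φ.apply_pi_prod (0, A)] at this
    simp only [Prod.fst_add, Prod.snd_add, Pi.add_apply, Pi.neg_apply, Pi.zero_apply,
      add_neg_cancel, zero_mul, Finset.sum_const_zero, zero_add] at this
    nlinarith [hA q₀ hq₀ fun i => (hq₀neg i).le]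
  refine ⟨fun i => -φ (Pi.single i 1, 0) / τ, fun i => ?_, fun q hq => ?_⟩
  · refine div_nonneg (neg_nonneg.2 (hφC _ ?_)) hτ.le
    rw [closure_slackCone]
    exact ⟨Pi.single_nonneg.2 zero_le_one, mem_Iic.2 le_rfl⟩
  · have hq := hφK q hq
    rw [φ.apply_pi_prod, φ.apply_pi_prod (0, A)] at hq
    simp only [Pi.zero_apply, zero_mul, Finset.sum_const_zero, zero_add] at hq
    have hsum : τ * ∑ i, -φ (Pi.single i 1, 0) / τ * q.1 i
        = -∑ i, q.1 i * φ (Pi.single i 1, 0) := by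
      rw [Finset.mul_sum, ← Finset.sum_neg_distrib]
      exact Finset.sum_congr rfl fun i _ => by field_simp
    refine le_of_mul_le_mul_left ?_ hτ
    rw [mul_sub, hsum]
    linarith

end SlackCone

section LagrangianDuality

variable {Ξ ι : Type*} [Fintype ι] (F : Ξ → ℝ) (G : ι → Ξ → ℝ)

lemma le_sub_sum_mul_of_nonpos {ξ : Ξ} {l : ι → ℝ} (hl : ∀ i, 0 ≤ l i) (hξ : ∀ i, G i ξ ≤ 0) :
    F ξ ≤ F ξ - ∑ i, l i * G i ξ := by
  have : ∑ i, l i * G i ξ ≤ 0 :=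
    Finset.sum_nonpos fun i _ => mul_nonpos_of_nonneg_of_nonpos (hl i) (hξ i)
  linarith

lemma sInf_lagrangian_of_feasible {ξ : Ξ} (hξ : ∀ i, G i ξ ≤ 0) :
    sInf {s | ∃ l : ι → ℝ, (∀ i, 0 ≤ l i) ∧ s = F ξ - ∑ i, l i * G i ξ} = F ξ := by
  refine IsLeast.csInf_eq ⟨⟨0, fun _ => le_rfl, by simp⟩, ?_⟩
  rintro s ⟨l, hl, rfl⟩
  exact le_sub_sum_mul_of_nonpos F G hl hξ

-- The infimum is `-∞`, which `sInf` on `ℝ` reports as `0`.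
lemma sInf_lagrangian_of_infeasible {ξ : Ξ} {i : ι} (hi : 0 < G i ξ) :
    sInf {s | ∃ l : ι → ℝ, (∀ i, 0 ≤ l i) ∧ s = F ξ - ∑ i, l i * G i ξ} = 0 := by
  classical
  refine Real.sInf_of_not_bddBelow (not_bddBelow_iff.2 fun B => ?_)
  set t := (|F ξ - B| + 1) / G i ξ
  have ht : (0 : ι → ℝ) ≤ Pi.single i t := Pi.single_nonneg.2 (by positivity)
  refine ⟨_, ⟨Pi.single i t, ht, rfl⟩, ?_⟩
  have hsum : ∑ j, (Pi.single i t : ι → ℝ) j * G j ξ = |F ξ - B| + 1 := by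
    simp [Pi.single_apply, t, div_mul_cancel₀ _ hi.ne']
  rw [hsum]
  linarith [le_abs_self (F ξ - B)]

theorem sSup_sInf_lagrangian_eq (hF0 : ∀ ξ, 0 ≤ F ξ) (hF : BddAbove (range F))
    (hfeas : ∃ ξ, ∀ i, G i ξ ≤ 0) :
    sSup {r | ∃ ξ, r = sInf {s | ∃ l : ι → ℝ, (∀ i, 0 ≤ l i) ∧ s = F ξ - ∑ i, l i * G i ξ}}
      = sSup {r | ∃ ξ, (∀ i, G i ξ ≤ 0) ∧ r = F ξ} := by
  obtain ⟨ξ₀, hξ₀⟩ := hfeas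
  have hbdd : BddAbove {r | ∃ ξ, (∀ i, G i ξ ≤ 0) ∧ r = F ξ} :=
    hF.mono <| by rintro _ ⟨ξ, -, rfl⟩; exact ⟨ξ, rfl⟩
  have hle : ∀ ξ, (∀ i, G i ξ ≤ 0) → F ξ ≤ sSup {r | ∃ ξ, (∀ i, G i ξ ≤ 0) ∧ r = F ξ} :=
    fun ξ hξ => le_csSup hbdd ⟨ξ, hξ, rfl⟩
  refine IsLUB.csSup_eq ⟨?_, fun b hb => csSup_le ⟨_, ξ₀, hξ₀, rfl⟩ ?_⟩ ⟨_, ξ₀, rfl⟩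
  · rintro _ ⟨ξ, rfl⟩
    by_cases hξ : ∀ i, G i ξ ≤ 0
    · rw [sInf_lagrangian_of_feasible F G hξ]
      exact hle ξ hξ
    · obtain ⟨i, hi⟩ := not_forall.1 hξ
      rw [sInf_lagrangian_of_infeasible F G (not_le.1 hi)]
      exact (hF0 ξ₀).trans (hle ξ₀ hξ₀)
  · rintro _ ⟨ξ, hξ, rfl⟩
    exact sInf_lagrangian_of_feasible F G hξ ▸ hb ⟨ξ, rfl⟩

lemma bddAbove_lagrangian (hF : BddAbove (range F)) (hG : ∀ i, BddBelow (range (G i)))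
    {l : ι → ℝ} (hl : ∀ i, 0 ≤ l i) :
    BddAbove {r | ∃ ξ, r = F ξ - ∑ i, l i * G i ξ} := by
  obtain ⟨a, ha⟩ := hF
  choose b hb using hG
  refine ⟨a - ∑ i, l i * b i, ?_⟩
  rintro _ ⟨ξ, rfl⟩
  have hsum : ∑ i, l i * b i ≤ ∑ i, l i * G i ξ :=
    Finset.sum_le_sum fun i _ => mul_le_mul_of_nonneg_left (hb i ⟨ξ, rfl⟩) (hl i)
  linarith [ha ⟨ξ, rfl⟩]

theorem sInf_sSup_lagrangian_eq (hF : BddAbove (range F)) (hG : ∀ i, BddBelow (range (G i)))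
    (hconv : Convex ℝ (range fun ξ => (fun i => G i ξ, F ξ)))
    (hslater : ∃ ξ, ∀ i, G i ξ < 0) :
    sInf {s | ∃ l : ι → ℝ, (∀ i, 0 ≤ l i) ∧ s = sSup {r | ∃ ξ, r = F ξ - ∑ i, l i * G i ξ}}
      = sSup {r | ∃ ξ, (∀ i, G i ξ ≤ 0) ∧ r = F ξ} := by
  set A := sSup {r | ∃ ξ, (∀ i, G i ξ ≤ 0) ∧ r = F ξ}
  obtain ⟨ξ₀, hξ₀⟩ := hslater
  have hbdd : BddAbove {r | ∃ ξ, (∀ i, G i ξ ≤ 0) ∧ r = F ξ} :=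
    hF.mono <| by rintro _ ⟨ξ, -, rfl⟩; exact ⟨ξ, rfl⟩
  have hweak : ∀ l : ι → ℝ, (∀ i, 0 ≤ l i) →
      A ≤ sSup {r | ∃ ξ, r = F ξ - ∑ i, l i * G i ξ} := by
    intro l hl
    refine csSup_le ⟨_, ξ₀, fun i => (hξ₀ i).le, rfl⟩ ?_
    rintro _ ⟨ξ, hξ, rfl⟩
    exact (le_sub_sum_mul_of_nonpos F G hl hξ).trans
      (le_csSup (bddAbove_lagrangian F G hF hG hl) ⟨ξ, rfl⟩)
  obtain ⟨l, hl, hlA⟩ := exists_lagrange_multiplier hconv ⟨_, ⟨ξ₀, rfl⟩, hξ₀⟩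
    (A := A) (by rintro _ ⟨ξ, rfl⟩ hξ; exact le_csSup hbdd ⟨ξ, hξ, rfl⟩)
  have hattained : sSup {r | ∃ ξ, r = F ξ - ∑ i, l i * G i ξ} = A :=
    le_antisymm (csSup_le ⟨_, ξ₀, rfl⟩ fun _ ⟨ξ, hr⟩ => hr ▸ hlA _ ⟨ξ, rfl⟩) (hweak l hl)
  exact IsLeast.csInf_eq ⟨⟨l, hl, hattained.symm⟩, fun _ ⟨l', hl', hs⟩ => hs ▸ hweak l' hl'⟩

end LagrangianDuality

section Mixture

variable {X : Type*} [MeasurableSpace X]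

lemma isProbabilityMeasure_ofReal_smul_add {μ ν : Measure X} [IsProbabilityMeasure μ]
    [IsProbabilityMeasure ν] {a b : ℝ} (ha : 0 ≤ a) (hb : 0 ≤ b) (hab : a + b = 1) :
    IsProbabilityMeasure (ENNReal.ofReal a • μ + ENNReal.ofReal b • ν) :=
  ⟨by simp [← ENNReal.ofReal_add ha hb, hab]⟩

lemma integral_ofReal_smul_add {E : Type*} [NormedAddCommGroup E] [NormedSpace ℝ E]
    {μ ν : Measure X} {h : X → E} (hμ : Integrable h μ) (hν : Integrable h ν) {a b : ℝ}
    (ha : 0 ≤ a) (hb : 0 ≤ b) :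
    ∫ x, h x ∂(ENNReal.ofReal a • μ + ENNReal.ofReal b • ν)
      = a • ∫ x, h x ∂μ + b • ∫ x, h x ∂ν := by
  rw [integral_add_measure (hμ.smul_measure ENNReal.ofReal_ne_top)
    (hν.smul_measure ENNReal.ofReal_ne_top), integral_smul_measure, integral_smul_measure,
    ENNReal.toReal_ofReal ha, ENNReal.toReal_ofReal hb]

theorem convex_range_integral {ι : Type*} {f : X → ℝ} {g : ι → X → ℝ}
    (hf : ∀ ξ : ProbabilityMeasure X, Integrable f ξ)
    (hg : ∀ i (ξ : ProbabilityMeasure X), Integrable (g i) ξ) :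
    Convex ℝ (range fun ξ : ProbabilityMeasure X => (fun i => ∫ x, g i x ∂ξ, ∫ x, f x ∂ξ)) := by
  rintro _ ⟨ξ₁, rfl⟩ _ ⟨ξ₂, rfl⟩ a b ha hb hab
  have := isProbabilityMeasure_ofReal_smul_add (μ := (ξ₁ : Measure X)) (ν := ξ₂) ha hb hab
  refine ⟨⟨_, this⟩, ?_⟩
  ext
  · simp [integral_ofReal_smul_add (hg _ ξ₁) (hg _ ξ₂) ha hb]
  · simp [integral_ofReal_smul_add (hf ξ₁) (hf ξ₂) ha hb]

lemma integral_mem_Icc {μ : Measure X} [IsProbabilityMeasure μ] {h : X → ℝ} {a b : ℝ}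
    (hint : Integrable h μ) (hh : ∀ x, h x ∈ Icc a b) : ∫ x, h x ∂μ ∈ Icc a b :=
  ⟨by simpa using integral_mono (integrable_const a) hint fun x => (hh x).1,
    by simpa using integral_mono hint (integrable_const b) fun x => (hh x).2⟩

end Mixture

lemma exists_forall_integral_neg_of_dgval_pos {X : Type} [MeasurableSpace X] {m : ℕ}
    {g : Fin m → X → ℝ} (hd : 0 < dgval g) :
    ∃ ξ : ProbabilityMeasure X, ∀ i, ∫ x, g i x ∂(ξ : Measure X) < 0 := by
  by_contra! h
  refine hd.not_ge (Real.sSup_nonpos ?_)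
  rintro _ ⟨ξ, rfl⟩
  obtain ⟨i, hi⟩ := h ξ
  exact (ciInf_le (finite_range _).bddBelow i).trans (neg_nonpos.2 hi)

theorem statement0_general {X : Type} [MeasurableSpace X] {m : ℕ}
    (f : X → ℝ) (g : Fin m → X → ℝ)
    (hfm : Measurable f) (hf01 : ∀ y, f y ∈ Set.Icc (0:ℝ) 1)
    (hgm : ∀ i, Measurable (g i)) (hg1 : ∀ i y, g i y ∈ Set.Icc (-1:ℝ) 1)
    (hd : 0 < dgval g) :
    sSup {r : ℝ | ∃ ξ : ProbabilityMeasure X,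
        r = sInf {s : ℝ | ∃ l : Fin m → ℝ, (∀ i, 0 ≤ l i) ∧ s = lagrangian f g ξ l}}
      = OPTval f g ∧
    sInf {s : ℝ | ∃ l : Fin m → ℝ, (∀ i, 0 ≤ l i) ∧
        s = sSup {r : ℝ | ∃ ξ : ProbabilityMeasure X, r = lagrangian f g ξ l}}
      = OPTval f g := by
  have hfi (ξ : ProbabilityMeasure X) : Integrable f ξ :=
    .of_mem_Icc 0 1 hfm.aemeasurable (ae_of_all _ hf01)
  have hgi (i) (ξ : ProbabilityMeasure X) : Integrable (g i) ξ :=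
    .of_mem_Icc (-1) 1 (hgm i).aemeasurable (ae_of_all _ (hg1 i))
  have hF (ξ : ProbabilityMeasure X) := integral_mem_Icc (hfi ξ) hf01
  have hFbdd : BddAbove (range fun ξ : ProbabilityMeasure X => ∫ x, f x ∂(ξ : Measure X)) :=
    ⟨1, by rintro _ ⟨ξ, rfl⟩; exact (hF ξ).2⟩
  have hGbdd (i) : BddBelow (range fun ξ : ProbabilityMeasure X => ∫ x, g i x ∂(ξ : Measure X)) :=
    ⟨-1, by rintro _ ⟨ξ, rfl⟩; exact (integral_mem_Icc (hgi i ξ) (hg1 i)).1⟩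
  obtain ⟨ξ₀, hξ₀⟩ := exists_forall_integral_neg_of_dgval_pos hd
  exact ⟨sSup_sInf_lagrangian_eq _ _ (fun ξ => (hF ξ).1) hFbdd ⟨ξ₀, fun i => (hξ₀ i).le⟩,
    sInf_sSup_lagrangian_eq _ _ hFbdd hGbdd (convex_range_integral hfi hgi) ⟨ξ₀, hξ₀⟩⟩

/-- Strong duality for the mixture-relaxed program with unrestricted nonnegative duals. -/
theorem statement0 {X : Type} [MeasurableSpace X] {m : ℕ} (hm : 0 < m)
    (f : X → ℝ) (g : Fin m → X → ℝ)
    (hfm : Measurable f) (hf01 : ∀ y, f y ∈ Set.Icc (0:ℝ) 1)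
    (hgm : ∀ i, Measurable (g i)) (hg1 : ∀ i y, g i y ∈ Set.Icc (-1:ℝ) 1)
    (hd : 0 < dgval g) :
    sSup {r : ℝ | ∃ ξ : ProbabilityMeasure X,
        r = sInf {s : ℝ | ∃ l : Fin m → ℝ, (∀ i, 0 ≤ l i) ∧ s = lagrangian f g ξ l}}
      = OPTval f g ∧
    sInf {s : ℝ | ∃ l : Fin m → ℝ, (∀ i, 0 ≤ l i) ∧
        s = sSup {r : ℝ | ∃ ξ : ProbabilityMeasure X, r = lagrangian f g ξ l}}
      = OPTval f g :=
  statement0_general f g hfm hf01 hgm hg1 hd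
end

section
/- Let X be a measurable space, Ξ the set of probability measures on X, f : X → ℝ measurable with values in [0,1], g : X → ℝ^m measurable with components in [−1,1], and assume d_g > 0. Then the infimum of the dual function over all nonnegative multipliers is attained already on the truncated dual set: inf_{λ∈ℝ^m_{≥0}} sup_{ξ∈Ξ} L_{f,g}(ξ,λ) = inf_{λ∈D_{d_g}} sup_{ξ∈Ξ} L_{f,g}(ξ,λ). In particular, for every λ ∈ ℝ^m_{≥0} with ‖λ‖₁ > 1/d_g one has sup_{ξ∈Ξ} L_{f,g}(ξ,λ) > 1, while inf_{λ∈D_{d_g}} sup_{ξ∈Ξ} L_{f,g}(ξ,λ) ≤ 1. -/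
/-!
For `λ ≥ 0` and a probability measure `ξ`, `f ≥ 0` gives
`L(ξ, λ) ≥ ‖λ‖₁ · minᵢ (−gᵢ(ξ))`; taking suprema over `ξ` yields `sup_ξ L(ξ, λ) ≥ ‖λ‖₁ · d_g`,
which exceeds `1` as soon as `‖λ‖₁ > 1 / d_g`. On the other hand `sup_ξ L(ξ, 0) = sup_ξ f(ξ) ≤ 1`
and `0 ∈ D_{d_g}`, so multipliers outside `D_{d_g}` never lower the infimum.
-/

open MeasureTheory

/-- The dual function `λ ↦ sup_{ξ∈Ξ} L_{f,g}(ξ,λ)`. -/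
noncomputable def dualfn {X : Type} [MeasurableSpace X] {m : ℕ}
    (f : X → ℝ) (g : Fin m → X → ℝ) (l : Fin m → ℝ) : ℝ :=
  sSup {r : ℝ | ∃ ξ : ProbabilityMeasure X, r = lagrangian f g ξ l}

lemma integral_mem_Icc_neg_one_one {X : Type*} [MeasurableSpace X] (μ : Measure X)
    [IsProbabilityMeasure μ] {h : X → ℝ} (hh : ∀ y, h y ∈ Set.Icc (-1 : ℝ) 1) :
    ∫ y, h y ∂μ ∈ Set.Icc (-1 : ℝ) 1 := by
  have := norm_integral_le_of_norm_le_const (μ := μ) (f := h)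
    (.of_forall fun y => (Real.norm_eq_abs _).trans_le (abs_le.mpr (hh y)))
  simpa [Real.norm_eq_abs, abs_le] using this

lemma integral_mem_Icc_zero_one {X : Type*} [MeasurableSpace X] (μ : Measure X)
    [IsProbabilityMeasure μ] {h : X → ℝ} (hh : ∀ y, h y ∈ Set.Icc (0 : ℝ) 1) :
    ∫ y, h y ∂μ ∈ Set.Icc (0 : ℝ) 1 :=
  ⟨integral_nonneg fun y => (hh y).1,
    (integral_mem_Icc_neg_one_one μ fun y => ⟨by linarith [(hh y).1], (hh y).2⟩).2⟩

section Lagrangian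

variable {X : Type} [MeasurableSpace X] {m : ℕ} {f : X → ℝ} {g : Fin m → X → ℝ}
  {l : Fin m → ℝ}

lemma lagrangian_zero (ξ : ProbabilityMeasure X) :
    lagrangian f g ξ 0 = ∫ y, f y ∂(ξ : Measure X) := by
  simp [lagrangian]

lemma lagrangian_le_one_add_sum (hf01 : ∀ y, f y ∈ Set.Icc (0 : ℝ) 1)
    (hg1 : ∀ i y, g i y ∈ Set.Icc (-1 : ℝ) 1) (hl : ∀ i, 0 ≤ l i) (ξ : ProbabilityMeasure X) :
    lagrangian f g ξ l ≤ 1 + ∑ i, l i := by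
  have hg : ∑ i, l i * (-1) ≤ ∑ i, l i * ∫ y, g i y ∂(ξ : Measure X) :=
    Finset.sum_le_sum fun i _ =>
      mul_le_mul_of_nonneg_left (integral_mem_Icc_neg_one_one (ξ : Measure X) (hg1 i)).1 (hl i)
  simp only [mul_neg_one, Finset.sum_neg_distrib] at hg
  have hf := (integral_mem_Icc_zero_one (ξ : Measure X) hf01).2
  rw [lagrangian]
  linarith

lemma sum_mul_iInf_le_lagrangian (hf0 : ∀ y, 0 ≤ f y) (hl : ∀ i, 0 ≤ l i)
    (ξ : ProbabilityMeasure X) :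
    (∑ i, l i) * (⨅ j, -∫ y, g j y ∂(ξ : Measure X)) ≤ lagrangian f g ξ l := by
  have hg : ∑ i, l i * (⨅ j, -∫ y, g j y ∂(ξ : Measure X))
      ≤ ∑ i, l i * -∫ y, g i y ∂(ξ : Measure X) :=
    Finset.sum_le_sum fun i _ =>
      mul_le_mul_of_nonneg_left (ciInf_le (Set.finite_range _).bddBelow i) (hl i)
  simp only [← Finset.sum_mul, mul_neg, Finset.sum_neg_distrib] at hg
  have hf : 0 ≤ ∫ y, f y ∂(ξ : Measure X) := integral_nonneg hf0
  rw [lagrangian]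
  linarith

lemma lagrangian_le_dualfn (hf01 : ∀ y, f y ∈ Set.Icc (0 : ℝ) 1)
    (hg1 : ∀ i y, g i y ∈ Set.Icc (-1 : ℝ) 1) (hl : ∀ i, 0 ≤ l i) (ξ : ProbabilityMeasure X) :
    lagrangian f g ξ l ≤ dualfn f g l :=
  le_csSup ⟨1 + ∑ i, l i, by rintro _ ⟨ξ', rfl⟩; exact lagrangian_le_one_add_sum hf01 hg1 hl ξ'⟩
    ⟨ξ, rfl⟩

lemma nonempty_probabilityMeasure_of_dgval_pos (hd : 0 < dgval g) :
    Nonempty (ProbabilityMeasure X) := by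
  by_contra hX
  rw [not_nonempty_iff] at hX
  simp [dgval] at hd

lemma sum_mul_dgval_le_dualfn [Nonempty (ProbabilityMeasure X)]
    (hf01 : ∀ y, f y ∈ Set.Icc (0 : ℝ) 1) (hg1 : ∀ i y, g i y ∈ Set.Icc (-1 : ℝ) 1)
    (hl : ∀ i, 0 ≤ l i) :
    (∑ i, l i) * dgval g ≤ dualfn f g l := by
  have hsum : 0 ≤ ∑ i, l i := Finset.sum_nonneg fun i _ => hl i
  rw [dgval, ← smul_eq_mul, ← Real.sSup_smul_of_nonneg hsum]
  refine csSup_le (Set.Nonempty.smul_set ⟨_, Classical.arbitrary _, rfl⟩) ?_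
  rintro _ ⟨_, ⟨ξ, rfl⟩, rfl⟩
  exact (sum_mul_iInf_le_lagrangian (fun y => (hf01 y).1) hl ξ).trans
    (lagrangian_le_dualfn hf01 hg1 hl ξ)

lemma one_lt_dualfn (hf01 : ∀ y, f y ∈ Set.Icc (0 : ℝ) 1)
    (hg1 : ∀ i y, g i y ∈ Set.Icc (-1 : ℝ) 1) (hd : 0 < dgval g) (hl : ∀ i, 0 ≤ l i)
    (hl_large : 1 / dgval g < ∑ i, l i) :
    1 < dualfn f g l := by
  have := nonempty_probabilityMeasure_of_dgval_pos hd
  rw [div_lt_iff₀ hd] at hl_large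
  exact hl_large.trans_le (sum_mul_dgval_le_dualfn hf01 hg1 hl)

lemma dualfn_zero_le_one (hf01 : ∀ y, f y ∈ Set.Icc (0 : ℝ) 1) :
    dualfn f g 0 ≤ 1 := by
  refine Real.sSup_le ?_ zero_le_one
  rintro _ ⟨ξ, rfl⟩
  exact (lagrangian_zero ξ).trans_le (integral_mem_Icc_zero_one (ξ : Measure X) hf01).2

end Lagrangian

theorem statement1_general {X : Type} [MeasurableSpace X] {m : ℕ}
    (f : X → ℝ) (g : Fin m → X → ℝ)
    (hf01 : ∀ y, f y ∈ Set.Icc (0:ℝ) 1)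
    (hg1 : ∀ i y, g i y ∈ Set.Icc (-1:ℝ) 1)
    (hd : 0 < dgval g) :
    sInf {s : ℝ | ∃ l : Fin m → ℝ, (∀ i, 0 ≤ l i) ∧ s = dualfn f g l}
      = sInf {s : ℝ | ∃ l : Fin m → ℝ,
          (∀ i, 0 ≤ l i) ∧ (∑ i, l i ≤ 1 / dgval g) ∧ s = dualfn f g l} ∧
    (∀ l : Fin m → ℝ, (∀ i, 0 ≤ l i) → 1 / dgval g < ∑ i, l i → 1 < dualfn f g l) ∧
    sInf {s : ℝ | ∃ l : Fin m → ℝ,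
        (∀ i, 0 ≤ l i) ∧ (∑ i, l i ≤ 1 / dgval g) ∧ s = dualfn f g l} ≤ 1 := by
  have := nonempty_probabilityMeasure_of_dgval_pos hd
  set D := {s : ℝ | ∃ l : Fin m → ℝ,
    (∀ i, 0 ≤ l i) ∧ (∑ i, l i ≤ 1 / dgval g) ∧ s = dualfn f g l}
  have hzero_mem : dualfn f g 0 ∈ D := ⟨0, fun _ => le_rfl, by simpa using hd.le, rfl⟩
  have hinf_le_one : sInf D ≤ 1 := by
    refine (csInf_le ⟨0, ?_⟩ hzero_mem).trans (dualfn_zero_le_one hf01)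
    rintro _ ⟨l, hl, -, rfl⟩
    exact (mul_nonneg (Finset.sum_nonneg fun i _ => hl i) hd.le).trans
      (sum_mul_dgval_le_dualfn hf01 hg1 hl)
  refine ⟨csInf_eq_csInf_of_forall_exists_le ?_ ?_,
    fun l hl => one_lt_dualfn hf01 hg1 hd hl, hinf_le_one⟩
  · rintro _ ⟨l, hl, rfl⟩
    by_cases hsmall : ∑ i, l i ≤ 1 / dgval g
    · exact ⟨_, ⟨l, hl, hsmall, rfl⟩, le_rfl⟩
    · exact ⟨_, hzero_mem, (dualfn_zero_le_one hf01).trans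
        (one_lt_dualfn hf01 hg1 hd hl (not_le.mp hsmall)).le⟩
  · rintro _ ⟨l, hl, -, rfl⟩
    exact ⟨_, ⟨l, hl, rfl⟩, le_rfl⟩

/-- The infimum of the dual function over all nonnegative multipliers is attained on the
truncated dual set `D_{d_g}`; moreover duals outside `D_{d_g}` have value `> 1` while the
truncated infimum is `≤ 1`. -/
theorem statement1 {X : Type} [MeasurableSpace X] {m : ℕ} (hm : 0 < m)
    (f : X → ℝ) (g : Fin m → X → ℝ)
    (hfm : Measurable f) (hf01 : ∀ y, f y ∈ Set.Icc (0:ℝ) 1)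
    (hgm : ∀ i, Measurable (g i)) (hg1 : ∀ i y, g i y ∈ Set.Icc (-1:ℝ) 1)
    (hd : 0 < dgval g) :
    sInf {s : ℝ | ∃ l : Fin m → ℝ, (∀ i, 0 ≤ l i) ∧ s = dualfn f g l}
      = sInf {s : ℝ | ∃ l : Fin m → ℝ,
          (∀ i, 0 ≤ l i) ∧ (∑ i, l i ≤ 1 / dgval g) ∧ s = dualfn f g l} ∧
    (∀ l : Fin m → ℝ, (∀ i, 0 ≤ l i) → 1 / dgval g < ∑ i, l i → 1 < dualfn f g l) ∧
    sInf {s : ℝ | ∃ l : Fin m → ℝ,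
        (∀ i, 0 ≤ l i) ∧ (∑ i, l i ≤ 1 / dgval g) ∧ s = dualfn f g l} ≤ 1 :=
  statement1_general f g hf01 hg1 hd
end

section
/- Let X be a measurable space, Ξ the set of probability measures on X, f : X → ℝ measurable with values in [0,1], and g : X → ℝ^m measurable with components in [−1,1]. If d_g > 0, then strong duality holds with the dual variables restricted to the truncated set D_{d_g}: sup_{ξ∈Ξ} inf_{λ∈D_{d_g}} L_{f,g}(ξ,λ) = inf_{λ∈D_{d_g}} sup_{ξ∈Ξ} L_{f,g}(ξ,λ) = OPT_{f,g}. -/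
/-!
Mixtures of probability measures are probability measures, so the moment set
`{(g(ξ), f(ξ)) : ξ ∈ Ξ} ⊆ ℝ^m × ℝ` is convex. Adding the open cone `{v > 0} × {t < 0}` gives an
open convex set missing `(0, OPT)`, and a Hahn–Banach functional separating them has a positive
objective coefficient because of a Slater point. Normalising it gives `λ ≥ 0` with
`L(ξ, λ) ≤ OPT` for every `ξ`. Evaluating at `ξ` with `min_i -g_i(ξ) ≥ r` gives
`r ‖λ‖₁ ≤ OPT - f(ξ) ≤ 1`, and letting `r ↑ d_g` shows `λ ∈ D_{d_g}`. Such a `λ`, together with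
`L(ξ, ·) ≥ f(ξ)` at feasible `ξ`, is a saddle point, which forces both sup-inf and inf-sup to
equal `OPT`.
-/

open MeasureTheory

open Set Pointwise

section Saddle

variable {α β : Type*} (L : α → β → ℝ) {s : Set β} {v : ℝ} {b₀ : β}

theorem sSup_range_sInf_image_eq_of_saddle (hL : ∀ a, BddBelow (L a '' s)) (hb₀ : b₀ ∈ s)
    (hb₀v : ∀ a, L a b₀ ≤ v) (hv : ∀ w < v, ∃ a, ∀ b ∈ s, w ≤ L a b) :
    sSup (range fun a => sInf (L a '' s)) = v := by
  obtain ⟨a₀, -⟩ := hv (v - 1) (by linarith)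
  refine csSup_eq_of_forall_le_of_forall_lt_exists_gt (range_nonempty_iff_nonempty.2 ⟨a₀⟩) ?_ ?_
  · rintro _ ⟨a, rfl⟩
    exact (csInf_le (hL a) (mem_image_of_mem _ hb₀)).trans (hb₀v a)
  · intro w hw
    obtain ⟨w', hww', hw'v⟩ := exists_between hw
    obtain ⟨a, ha⟩ := hv w' hw'v
    exact ⟨_, mem_range_self a, hww'.trans_le <|
      le_csInf ⟨_, mem_image_of_mem _ hb₀⟩ (forall_mem_image.2 ha)⟩

theorem sInf_image_sSup_range_eq_of_saddle (hL : ∀ b ∈ s, BddAbove (range (L · b)))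
    (hb₀ : b₀ ∈ s) (hb₀v : ∀ a, L a b₀ ≤ v) (hv : ∀ w < v, ∃ a, ∀ b ∈ s, w ≤ L a b) :
    sInf ((fun b => sSup (range (L · b))) '' s) = v := by
  obtain ⟨a₀, -⟩ := hv (v - 1) (by linarith)
  refine csInf_eq_of_forall_ge_of_forall_gt_exists_lt ⟨_, mem_image_of_mem _ hb₀⟩ ?_ ?_
  · rintro _ ⟨b, hb, rfl⟩
    refine le_of_forall_lt_imp_le_of_dense fun w hw => ?_
    obtain ⟨a, ha⟩ := hv w hw
    exact (ha b hb).trans (le_csSup (hL b hb) (mem_range_self a))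
  · intro w hw
    exact ⟨_, mem_image_of_mem _ hb₀,
      (csSup_le (range_nonempty_iff_nonempty.2 ⟨a₀⟩) (forall_mem_range.2 hb₀v)).trans_lt hw⟩

end Saddle

section LagrangeMultiplier

variable {ι : Type*} [Fintype ι]

lemma le_of_forall_pos_add_mul_lt {a b k : ℝ} (h : ∀ s > 0, a + s * k < b) : a ≤ b := by
  by_contra! hba
  have hs : 0 < (a - b) / (|k| + 1) := div_pos (by linarith) (by positivity)
  have hsk : (a - b) / (|k| + 1) * |k| < a - b := by
    rw [div_mul_eq_mul_div, div_lt_iff₀ (by positivity)]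
    nlinarith [abs_nonneg k]
  linarith [h _ hs, neg_abs_le k, mul_le_mul_of_nonneg_left (neg_abs_le k) hs.le]

lemma nonpos_of_forall_nonneg_add_mul_le {a b k : ℝ} (h : ∀ t ≥ 0, a + t * k ≤ b) : k ≤ 0 := by
  by_contra! hk
  have hab : a ≤ b := by simpa using h 0 le_rfl
  have := h ((b - a + 1) / k) (by positivity)
  rw [div_mul_cancel₀ _ hk.ne'] at this
  linarith

lemma ContinuousLinearMap.apply_pi_prod_eq_sum [DecidableEq ι] (φ : ((ι → ℝ) × ℝ) →L[ℝ] ℝ)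
    (v : ι → ℝ) (t : ℝ) :
    φ (v, t) = ∑ i, v i * φ (Pi.single i 1, 0) + t * φ (0, 1) := by
  have hvt : ((v, t) : (ι → ℝ) × ℝ) = ∑ i, v i • (Pi.single i 1, 0) + t • (0, 1) := by
    ext
    · simp [Prod.fst_sum, Finset.sum_apply, Pi.single_apply]
    · simp [Prod.snd_sum]
  rw [hvt, map_add, map_sum]
  simp only [map_smul, smul_eq_mul]

theorem exists_separating_functional_s2 {S : Set ((ι → ℝ) × ℝ)} (hS : Convex ℝ S) {c : ℝ}
    (hc : ∀ p ∈ S, (∀ i, p.1 i < 0) → p.2 ≤ c) :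
    ∃ φ : StrongDual ℝ ((ι → ℝ) × ℝ),
      (∀ p ∈ S, ∀ v t, (∀ i, 0 < v i) → t < 0 → φ p + φ (v, t) < φ (0, c)) ∧
      ∀ p ∈ S, ∀ v t, (∀ i, 0 ≤ v i) → t ≤ 0 → φ p + φ (v, t) ≤ φ (0, c) := by
  set K : Set ((ι → ℝ) × ℝ) := (univ.pi fun _ => Ioi 0) ×ˢ Iio 0
  have mem_K : ∀ v t, (v, t) ∈ K ↔ (∀ i, 0 < v i) ∧ t < 0 := by simp [K]
  have hK : IsOpen K := (isOpen_set_pi finite_univ fun _ _ => isOpen_Ioi).prod isOpen_Iio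
  have hKconv : Convex ℝ K := (convex_pi fun _ _ => convex_Ioi 0).prod (convex_Iio 0)
  have hx : ((0 : ι → ℝ), c) ∉ S + K := by
    rintro ⟨p, hp, q, hq, hpq⟩
    obtain ⟨hq₁, hq₂⟩ := (mem_K q.1 q.2).1 hq
    have h₁ (i : ι) : p.1 i = -q.1 i := by
      have := congr_fun (congr_arg Prod.fst hpq) i; simp at this; linarith
    have h₂ : p.2 = c - q.2 := by have := congr_arg Prod.snd hpq; simp at this; linarith
    have := hc p hp fun i => by rw [h₁]; linarith [hq₁ i]
    linarith
  obtain ⟨φ, hφ⟩ := geometric_hahn_banach_open_point (hS.add hKconv) hK.add_left hx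
  have hφ' : ∀ p ∈ S, ∀ v t, (∀ i, 0 < v i) → t < 0 → φ p + φ (v, t) < φ (0, c) :=
    fun p hp v t hv ht => by simpa using hφ _ (add_mem_add hp ((mem_K v t).2 ⟨hv, ht⟩))
  refine ⟨φ, hφ', fun p hp v t hv ht => ?_⟩
  refine le_of_forall_pos_add_mul_lt (k := φ (fun _ => 1, -1)) fun s hs => ?_
  have := hφ' p hp (v + s • fun _ => 1) (t - s) (fun i => by simp; linarith [hv i]) (by linarith)
  rwa [show ((v + s • fun _ => 1, t - s) : (ι → ℝ) × ℝ) = (v, t) + s • (fun _ => 1, -1) by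
    ext <;> simp [sub_eq_add_neg], map_add, map_smul, smul_eq_mul, ← add_assoc] at this

theorem exists_lagrange_multiplier_s2 {S : Set ((ι → ℝ) × ℝ)} (hS : Convex ℝ S) {c : ℝ}
    (hc : ∀ p ∈ S, (∀ i, p.1 i < 0) → p.2 ≤ c) {p₀ : (ι → ℝ) × ℝ} (hp₀ : p₀ ∈ S)
    (hslater : ∀ i, p₀.1 i < 0) :
    ∃ l : ι → ℝ, (∀ i, 0 ≤ l i) ∧ ∀ p ∈ S, p.2 - ∑ i, l i * p.1 i ≤ c := by
  classical
  obtain ⟨φ, hφ_lt, hφ_le⟩ := exists_separating_functional_s2 hS hc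
  set μ : ι → ℝ := fun i => φ (Pi.single i 1, 0)
  set β := φ (0, 1)
  have hφ_expand (v : ι → ℝ) (t : ℝ) : φ (v, t) = ∑ i, v i * μ i + t * β :=
    φ.apply_pi_prod_eq_sum v t
  have hμ (i : ι) : μ i ≤ 0 := nonpos_of_forall_nonneg_add_mul_le fun t ht => by
    have hv : ∀ j, 0 ≤ (t • Pi.single i 1 : ι → ℝ) j := fun j => by
      by_cases hj : j = i <;> simp [hj, ht]
    have := hφ_le p₀ hp₀ _ 0 hv le_rfl
    rwa [show ((t • Pi.single i 1, 0) : (ι → ℝ) × ℝ) = t • (Pi.single i 1, 0) by simp,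
      map_smul, smul_eq_mul] at this
  have hβ : 0 ≤ β := neg_nonpos.1 <| nonpos_of_forall_nonneg_add_mul_le fun t ht => by
    have := hφ_le p₀ hp₀ 0 (-t) (fun _ => le_rfl) (by linarith)
    rwa [show ((0, -t) : (ι → ℝ) × ℝ) = (-t) • (0, 1) by simp, map_smul, smul_eq_mul,
      neg_mul, ← mul_neg] at this
  have hβ_pos : 0 < β := by
    have := hφ_lt p₀ hp₀ (-p₀.1) (-1) (fun i => by simp [hslater i]) (by norm_num)
    rw [← map_add, hφ_expand, hφ_expand] at this
    refine hβ.lt_of_ne fun h => ?_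
    simp [← h] at this
  refine ⟨fun i => -μ i / β, fun i => div_nonneg (neg_nonneg.2 (hμ i)) hβ, fun p hp => ?_⟩
  have hp_le := hφ_le p hp 0 0 (fun _ => le_rfl) le_rfl
  rw [Prod.mk_zero_zero, map_zero, add_zero, ← Prod.mk.eta (p := p), hφ_expand, hφ_expand]
    at hp_le
  have hβ_mul : β * (p.2 - ∑ i, -μ i / β * p.1 i) = ∑ i, p.1 i * μ i + p.2 * β := by
    have hterm (i : ι) : β * (-μ i / β * p.1 i) = -(p.1 i * μ i) := by field_simp
    rw [mul_sub, Finset.mul_sum]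
    simp only [hterm, Finset.sum_neg_distrib]
    ring
  refine le_of_mul_le_mul_left ?_ hβ_pos
  simp only [hβ_mul]
  simpa [mul_comm β] using hp_le

end LagrangeMultiplier

section Mixture

variable {X : Type*} [MeasurableSpace X]

lemma integrable_of_forall_abs_le_one {μ : Measure X} [IsFiniteMeasure μ] {h : X → ℝ}
    (hm : Measurable h) (hb : ∀ y, |h y| ≤ 1) : Integrable h μ :=
  .of_bound hm.aestronglyMeasurable 1 (.of_forall hb)

lemma abs_integral_le_one (ξ : ProbabilityMeasure X) {h : X → ℝ} (hb : ∀ y, |h y| ≤ 1) :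
    |∫ y, h y ∂(ξ : Measure X)| ≤ 1 := by
  simpa using norm_integral_le_of_norm_le_const (μ := (ξ : Measure X)) (f := h) (C := 1)
    (.of_forall hb)

lemma MeasureTheory.ProbabilityMeasure.exists_integral_eq_add (ξ₁ ξ₂ : ProbabilityMeasure X)
    {a b : ℝ} (ha : 0 ≤ a) (hb : 0 ≤ b) (hab : a + b = 1) :
    ∃ ξ : ProbabilityMeasure X, ∀ h : X → ℝ, Integrable h ξ₁ → Integrable h ξ₂ →
      ∫ y, h y ∂(ξ : Measure X) =
        a * ∫ y, h y ∂(ξ₁ : Measure X) + b * ∫ y, h y ∂(ξ₂ : Measure X) := by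
  set ν := ENNReal.ofReal a • (ξ₁ : Measure X) + ENNReal.ofReal b • (ξ₂ : Measure X)
  have hν : IsProbabilityMeasure ν := ⟨by simp [ν, ← ENNReal.ofReal_add ha hb, hab]⟩
  refine ⟨⟨ν, hν⟩, fun h h₁ h₂ => ?_⟩
  change ∫ y, h y ∂ν = _
  rw [integral_add_measure (h₁.smul_measure ENNReal.ofReal_ne_top)
    (h₂.smul_measure ENNReal.ofReal_ne_top), integral_smul_measure, integral_smul_measure,
    ENNReal.toReal_ofReal ha, ENNReal.toReal_ofReal hb, smul_eq_mul, smul_eq_mul]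

lemma convex_range_integrals {ι : Type*} {f : X → ℝ} {g : ι → X → ℝ}
    (hf : ∀ ξ : ProbabilityMeasure X, Integrable f ξ)
    (hg : ∀ i (ξ : ProbabilityMeasure X), Integrable (g i) ξ) :
    Convex ℝ (range fun ξ : ProbabilityMeasure X =>
      ((fun i => ∫ y, g i y ∂(ξ : Measure X)), ∫ y, f y ∂(ξ : Measure X))) := by
  rintro _ ⟨ξ₁, rfl⟩ _ ⟨ξ₂, rfl⟩ a b ha hb hab
  obtain ⟨ξ, hξ⟩ := ξ₁.exists_integral_eq_add ξ₂ ha hb hab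
  refine ⟨ξ, Prod.ext (funext fun i => ?_) ?_⟩
  · simp [hξ _ (hg i ξ₁) (hg i ξ₂)]
  · simp [hξ _ (hf ξ₁) (hf ξ₂)]

end Mixture

section Duality

variable {X : Type} [MeasurableSpace X] {m : ℕ} {f : X → ℝ} {g : Fin m → X → ℝ}

def truncatedDuals (m : ℕ) (q : ℝ) : Set (Fin m → ℝ) :=
  {l | (∀ i, 0 ≤ l i) ∧ ∑ i, l i ≤ 1 / q}

lemma exists_forall_integral_le_neg_of_lt_dgval (hd : 0 < dgval g) {r : ℝ} (hr : r < dgval g) :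
    ∃ ξ : ProbabilityMeasure X, ∀ i, ∫ y, g i y ∂(ξ : Measure X) ≤ -r := by
  have hne : {r : ℝ | ∃ ξ : ProbabilityMeasure X,
      r = ⨅ i, -(∫ y, g i y ∂(ξ : Measure X))}.Nonempty :=
    -- otherwise `dgval g = sSup ∅ = 0`
    nonempty_iff_ne_empty.2 fun h => by simp [dgval, h] at hd
  obtain ⟨_, ⟨ξ, rfl⟩, hrξ⟩ := exists_lt_of_lt_csSup hne hr
  exact ⟨ξ, fun i => by
    linarith [ciInf_le (Finite.bddBelow_range fun i => -(∫ y, g i y ∂(ξ : Measure X))) i]⟩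

lemma integral_le_lagrangian {ξ : ProbabilityMeasure X} {l : Fin m → ℝ}
    (hξ : ∀ i, ∫ y, g i y ∂(ξ : Measure X) ≤ 0) (hl : ∀ i, 0 ≤ l i) :
    ∫ y, f y ∂(ξ : Measure X) ≤ lagrangian f g ξ l := by
  have : ∑ i, l i * ∫ y, g i y ∂(ξ : Measure X) ≤ 0 :=
    Finset.sum_nonpos fun i _ => mul_nonpos_of_nonneg_of_nonpos (hl i) (hξ i)
  unfold lagrangian
  linarith

lemma abs_lagrangian_le (hf : ∀ y, |f y| ≤ 1) (hg : ∀ i y, |g i y| ≤ 1)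
    (ξ : ProbabilityMeasure X) {l : Fin m → ℝ} (hl : ∀ i, 0 ≤ l i) :
    |lagrangian f g ξ l| ≤ 1 + ∑ i, l i := by
  have hsum : |∑ i, l i * ∫ y, g i y ∂(ξ : Measure X)| ≤ ∑ i, l i :=
    (Finset.abs_sum_le_sum_abs _ _).trans <| Finset.sum_le_sum fun i _ => by
      rw [abs_mul, abs_of_nonneg (hl i)]
      exact mul_le_of_le_one_right (hl i) (abs_integral_le_one ξ (hg i))
  exact (abs_sub _ _).trans (add_le_add (abs_integral_le_one ξ hf) hsum)

lemma integral_le_OPTval (hf : ∀ y, |f y| ≤ 1) {ξ : ProbabilityMeasure X}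
    (hξ : ∀ i, ∫ y, g i y ∂(ξ : Measure X) ≤ 0) :
    ∫ y, f y ∂(ξ : Measure X) ≤ OPTval f g := by
  refine le_csSup ⟨1, ?_⟩ ⟨ξ, hξ, rfl⟩
  rintro _ ⟨ξ', -, rfl⟩
  exact (abs_le.1 (abs_integral_le_one ξ' hf)).2

lemma OPTval_le_one (hf : ∀ y, |f y| ≤ 1) : OPTval f g ≤ 1 := by
  refine Real.sSup_le ?_ zero_le_one
  rintro _ ⟨ξ, -, rfl⟩
  exact (abs_le.1 (abs_integral_le_one ξ hf)).2

lemma exists_forall_le_lagrangian_of_lt_OPTval (hd : 0 < dgval g) {w : ℝ}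
    (hw : w < OPTval f g) :
    ∃ ξ : ProbabilityMeasure X, ∀ l : Fin m → ℝ, (∀ i, 0 ≤ l i) → w ≤ lagrangian f g ξ l := by
  obtain ⟨ξ₀, hξ₀⟩ := exists_forall_integral_le_neg_of_lt_dgval hd hd
  obtain ⟨_, ⟨ξ, hξ, rfl⟩, hwξ⟩ := exists_lt_of_lt_csSup
    (by exact ⟨_, ξ₀, fun i => by simpa using hξ₀ i, rfl⟩) hw
  exact ⟨ξ, fun l hl => hwξ.le.trans (integral_le_lagrangian hξ hl)⟩

theorem exists_nonneg_forall_lagrangian_le_OPTval (hfm : Measurable f) (hf : ∀ y, |f y| ≤ 1)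
    (hgm : ∀ i, Measurable (g i)) (hg : ∀ i y, |g i y| ≤ 1)
    (hslater : ∃ ξ₀ : ProbabilityMeasure X, ∀ i, ∫ y, g i y ∂(ξ₀ : Measure X) < 0) :
    ∃ l : Fin m → ℝ, (∀ i, 0 ≤ l i) ∧ ∀ ξ, lagrangian f g ξ l ≤ OPTval f g := by
  obtain ⟨ξ₀, hξ₀⟩ := hslater
  obtain ⟨l, hl, hlS⟩ := exists_lagrange_multiplier_s2
    (convex_range_integrals (fun _ => integrable_of_forall_abs_le_one hfm hf)
      fun i _ => integrable_of_forall_abs_le_one (hgm i) (hg i))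
    (c := OPTval f g) (by rintro _ ⟨ξ, rfl⟩ hξ; exact integral_le_OPTval hf fun i => (hξ i).le)
    (mem_range_self ξ₀) hξ₀
  exact ⟨l, hl, fun ξ => hlS _ (mem_range_self ξ)⟩

lemma sum_le_one_div_dgval (hf : ∀ y, 0 ≤ f y) (hd : 0 < dgval g) {l : Fin m → ℝ}
    (hl : ∀ i, 0 ≤ l i) (hL : ∀ ξ, lagrangian f g ξ l ≤ 1) :
    ∑ i, l i ≤ 1 / dgval g := by
  rcases (Finset.sum_nonneg fun i _ => hl i).eq_or_lt with h | hpos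
  · rw [← h]; positivity
  rw [le_one_div hpos hd]
  refine le_of_forall_lt_imp_le_of_dense fun r hr => ?_
  obtain ⟨ξ, hξ⟩ := exists_forall_integral_le_neg_of_lt_dgval hd hr
  have hsum : r * ∑ i, l i ≤ -∑ i, l i * ∫ y, g i y ∂(ξ : Measure X) := by
    rw [Finset.mul_sum, ← Finset.sum_neg_distrib]
    exact Finset.sum_le_sum fun i _ => by nlinarith [hl i, hξ i]
  have := hL ξ
  have := integral_nonneg (μ := (ξ : Measure X)) (f := f) hf
  unfold lagrangian at *
  rw [le_div_iff₀ hpos]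
  linarith

theorem exists_mem_truncatedDuals_forall_lagrangian_le (hfm : Measurable f)
    (hf0 : ∀ y, 0 ≤ f y) (hf : ∀ y, |f y| ≤ 1) (hgm : ∀ i, Measurable (g i))
    (hg : ∀ i y, |g i y| ≤ 1) (hd : 0 < dgval g) :
    ∃ l ∈ truncatedDuals m (dgval g), ∀ ξ, lagrangian f g ξ l ≤ OPTval f g := by
  obtain ⟨ξ₀, hξ₀⟩ := exists_forall_integral_le_neg_of_lt_dgval hd (half_lt_self hd)
  obtain ⟨l, hl, hlL⟩ := exists_nonneg_forall_lagrangian_le_OPTval hfm hf hgm hg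
    ⟨ξ₀, fun i => (hξ₀ i).trans_lt (by linarith)⟩
  exact ⟨l, ⟨hl, sum_le_one_div_dgval hf0 hd hl fun ξ => (hlL ξ).trans (OPTval_le_one hf)⟩,
    hlL⟩

end Duality

theorem statement2_general {X : Type} [MeasurableSpace X] {m : ℕ}
    (f : X → ℝ) (g : Fin m → X → ℝ)
    (hfm : Measurable f) (hf01 : ∀ y, f y ∈ Set.Icc (0:ℝ) 1)
    (hgm : ∀ i, Measurable (g i)) (hg1 : ∀ i y, g i y ∈ Set.Icc (-1:ℝ) 1)
    (hd : 0 < dgval g) :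
    sSup {r : ℝ | ∃ ξ : ProbabilityMeasure X,
        r = sInf {s : ℝ | ∃ l : Fin m → ℝ,
          (∀ i, 0 ≤ l i) ∧ (∑ i, l i ≤ 1 / dgval g) ∧ s = lagrangian f g ξ l}}
      = OPTval f g ∧
    sInf {s : ℝ | ∃ l : Fin m → ℝ, (∀ i, 0 ≤ l i) ∧ (∑ i, l i ≤ 1 / dgval g) ∧
        s = sSup {r : ℝ | ∃ ξ : ProbabilityMeasure X, r = lagrangian f g ξ l}}
      = OPTval f g := by
  have hf : ∀ y, |f y| ≤ 1 := fun y => abs_le.2 ⟨by linarith [(hf01 y).1], (hf01 y).2⟩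
  have hg : ∀ i y, |g i y| ≤ 1 := fun i y => abs_le.2 (hg1 i y)
  set D := truncatedDuals m (dgval g)
  obtain ⟨l₀, hl₀, hl₀_le⟩ :=
    exists_mem_truncatedDuals_forall_lagrangian_le hfm (fun y => (hf01 y).1) hf hgm hg hd
  have hv (w : ℝ) (hw : w < OPTval f g) : ∃ ξ, ∀ l ∈ D, w ≤ lagrangian f g ξ l :=
    (exists_forall_le_lagrangian_of_lt_OPTval hd hw).imp fun _ hξ l hl => hξ l hl.1
  have hL_bdd (ξ) (l) (hl : l ∈ D) : |lagrangian f g ξ l| ≤ 1 + 1 / dgval g :=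
    (abs_lagrangian_le hf hg ξ hl.1).trans (by linarith [hl.2])
  constructor
  · convert sSup_range_sInf_image_eq_of_saddle (lagrangian f g) (s := D)
      (fun ξ => ⟨_, forall_mem_image.2 fun l hl => (abs_le.1 (hL_bdd ξ l hl)).1⟩) hl₀ hl₀_le hv
      using 3
    simp only [D, truncatedDuals, image, range, eq_comm, mem_ofPred_eq, and_assoc]
  · convert sInf_image_sSup_range_eq_of_saddle (lagrangian f g) (s := D)
      (fun l hl => ⟨_, forall_mem_range.2 fun ξ => (abs_le.1 (hL_bdd ξ l hl)).2⟩) hl₀ hl₀_le hv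
      using 3
    simp only [D, truncatedDuals, image, range, eq_comm, mem_ofPred_eq, and_assoc]

/-- Strong duality with duals restricted to the truncated set
`D_{d_g} = {λ ≥ 0 : ‖λ‖₁ ≤ 1/d_g}`. -/
theorem statement2 {X : Type} [MeasurableSpace X] {m : ℕ} (hm : 0 < m)
    (f : X → ℝ) (g : Fin m → X → ℝ)
    (hfm : Measurable f) (hf01 : ∀ y, f y ∈ Set.Icc (0:ℝ) 1)
    (hgm : ∀ i, Measurable (g i)) (hg1 : ∀ i y, g i y ∈ Set.Icc (-1:ℝ) 1)
    (hd : 0 < dgval g) :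
    sSup {r : ℝ | ∃ ξ : ProbabilityMeasure X,
        r = sInf {s : ℝ | ∃ l : Fin m → ℝ,
          (∀ i, 0 ≤ l i) ∧ (∑ i, l i ≤ 1 / dgval g) ∧ s = lagrangian f g ξ l}}
      = OPTval f g ∧
    sInf {s : ℝ | ∃ l : Fin m → ℝ, (∀ i, 0 ≤ l i) ∧ (∑ i, l i ≤ 1 / dgval g) ∧
        s = sSup {r : ℝ | ∃ ξ : ProbabilityMeasure X, r = lagrangian f g ξ l}}
      = OPTval f g :=
  statement2_general f g hfm hf01 hgm hg1 hd
end

section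
/- (Play-phase reward bound, stochastic constraints.) Let T, T₁ ∈ ℕ with 1 ≤ T₁ ≤ T, let ρ̃ > 0, and let x_1,…,x_{T₁} ∈ X, λ_1,…,λ_{T₁} ∈ D_{ρ̃}, reward functions f_t : X → [0,1], constraint functions g_t : X → [−1,1]^m, a measurable ḡ : X → [−1,1]^m, ξ* ∈ Ξ with ḡ_i(ξ*) ≤ 0 for all i ∈ [m], and constants R^P, R^D, E ≥ 0. Assume: (i) Σ_{t=1}^{T₁} (f_t(x_t) − ⟨λ_t, g_t(x_t)⟩) ≥ Σ_{t=1}^{T₁} (f_t(ξ*) − ⟨λ_t, g_t(ξ*)⟩) − (1 + 2/ρ̃)·R^P; (ii) for every λ ∈ D_{ρ̃}, Σ_{t=1}^{T₁} ⟨λ_t, g_t(x_t)⟩ ≥ Σ_{t=1}^{T₁} ⟨λ, g_t(x_t)⟩ − R^D/ρ̃; (iii) either T₁ = T, or max_{i∈[m]} Σ_{t=1}^{T₁} g_{t,i}(x_t) ≥ (T − T₁)·ρ̃; (iv) Σ_{t=1}^{T₁} ⟨λ_t, g_t(ξ*)⟩ ≤ Σ_{t=1}^{T₁} ⟨λ_t,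 ḡ(ξ*)⟩ + E/ρ̃. Then Σ_{t=1}^{T₁} f_t(x_t) ≥ Σ_{t=1}^{T₁} f_t(ξ*) + (T − T₁) − E/ρ̃ − (1 + 2/ρ̃)·R^P − R^D/ρ̃. -/
open MeasureTheory Finset

/-!
Adding the primal regret bound (i) to the dual regret bound (ii) cancels the Lagrangian terms
`⟨λ_t, g_t(x_t)⟩`. The dual bound, applied to the comparator `0` when `T₁ = T` and to
`e_i / ρ̃` for the violated constraint `i` otherwise, shows that these terms sum to at least
`(T - T₁) - R^D / ρ̃`, while at `ξ*` they sum to at most `E / ρ̃` by (iv) and feasibility of `ξ*`.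
-/

theorem le_sum_weighted_of_dual_regret {ι : Type*} [Fintype ι] {s : Finset ℕ} {ρ R Δ : ℝ}
    (hρ : 0 < ρ) {lam v : ℕ → ι → ℝ}
    (hreg : ∀ l : ι → ℝ, (∀ i, 0 ≤ l i) → ∑ i, l i ≤ 1 / ρ →
      ∑ t ∈ s, ∑ i, lam t i * v t i ≥ ∑ t ∈ s, ∑ i, l i * v t i - R / ρ)
    (hviol : Δ = 0 ∨ ∃ i, Δ * ρ ≤ ∑ t ∈ s, v t i) :
    Δ - R / ρ ≤ ∑ t ∈ s, ∑ i, lam t i * v t i := by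
  classical
  rcases hviol with rfl | ⟨i, hi⟩
  · simpa using hreg 0 (fun _ => le_rfl) (by simp [hρ.le])
  · have hsingle := hreg (Pi.single i (1 / ρ))
      (fun j => by rw [Pi.single_apply]; split_ifs <;> positivity) (by simp)
    simp only [Pi.single_apply, ite_mul, zero_mul, sum_ite_eq', mem_univ, if_true,
      ← mul_sum] at hsingle
    have hΔ : Δ ≤ 1 / ρ * ∑ t ∈ s, v t i := by
      rwa [one_div_mul_eq_div, le_div_iff₀ hρ]
    linarith

theorem statement4_general {X : Type} [MeasurableSpace X] {m : ℕ}
    (T T₁ : ℕ)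
    (ρt : ℝ) (hρt : 0 < ρt)
    (x : ℕ → X) (lam : ℕ → Fin m → ℝ)
    -- the dual iterates lie in `D_{ρ̃}`
    (hlam : ∀ t ∈ Finset.Icc 1 T₁, (∀ i, 0 ≤ lam t i) ∧ ∑ i, lam t i ≤ 1 / ρt)
    (f : ℕ → X → ℝ) (g : ℕ → Fin m → X → ℝ)
    (gbar : Fin m → X → ℝ)
    (ξs : ProbabilityMeasure X)
    (hfeas : ∀ i, ∫ y, gbar i y ∂(ξs : Measure X) ≤ 0)
    (RP RD E : ℝ)
    -- (i) primal regret bound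
    (h1 : ∑ t ∈ Finset.Icc 1 T₁, (f t (x t) - ∑ i, lam t i * g t i (x t)) ≥
          ∑ t ∈ Finset.Icc 1 T₁, ((∫ y, f t y ∂(ξs : Measure X)) -
            ∑ i, lam t i * ∫ y, g t i y ∂(ξs : Measure X)) - (1 + 2 / ρt) * RP)
    -- (ii) dual regret bound
    (h2 : ∀ l : Fin m → ℝ, (∀ i, 0 ≤ l i) → (∑ i, l i ≤ 1 / ρt) →
          ∑ t ∈ Finset.Icc 1 T₁, ∑ i, lam t i * g t i (x t) ≥
          ∑ t ∈ Finset.Icc 1 T₁, ∑ i, l i * g t i (x t) - RD / ρt)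
    -- (iii) either the play phase lasts the whole horizon or some constraint is violated a lot
    (h3 : T₁ = T ∨ ∃ i, ((T : ℝ) - (T₁ : ℝ)) * ρt ≤ ∑ t ∈ Finset.Icc 1 T₁, g t i (x t))
    -- (iv) concentration of the constraints at ξ*
    (h4 : ∑ t ∈ Finset.Icc 1 T₁, ∑ i, lam t i * ∫ y, g t i y ∂(ξs : Measure X) ≤
          ∑ t ∈ Finset.Icc 1 T₁, ∑ i, lam t i * ∫ y, gbar i y ∂(ξs : Measure X) + E / ρt) :
    ∑ t ∈ Finset.Icc 1 T₁, f t (x t) ≥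
      ∑ t ∈ Finset.Icc 1 T₁, (∫ y, f t y ∂(ξs : Measure X)) + ((T : ℝ) - (T₁ : ℝ))
        - E / ρt - (1 + 2 / ρt) * RP - RD / ρt := by
  have hplay := le_sum_weighted_of_dual_regret hρt h2 (h3.imp (fun h => by rw [h, sub_self]) id)
  have hfeas_sum :
      ∑ t ∈ Finset.Icc 1 T₁, ∑ i, lam t i * ∫ y, gbar i y ∂(ξs : Measure X) ≤ 0 :=
    sum_nonpos fun t ht => sum_nonpos fun i _ =>
      mul_nonpos_of_nonneg_of_nonpos ((hlam t ht).1 i) (hfeas i)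
  rw [ge_iff_le, sum_sub_distrib, sum_sub_distrib] at h1
  linarith

/-- Play-phase reward bound with stochastic constraints (Lemma: small regret). -/
theorem statement4 {X : Type} [MeasurableSpace X] {m : ℕ} (hm : 0 < m)
    (T T₁ : ℕ) (hT₁ : 1 ≤ T₁) (hTT : T₁ ≤ T)
    (ρt : ℝ) (hρt : 0 < ρt)
    (x : ℕ → X) (lam : ℕ → Fin m → ℝ)
    -- the dual iterates lie in `D_{ρ̃}`
    (hlam : ∀ t ∈ Finset.Icc 1 T₁, (∀ i, 0 ≤ lam t i) ∧ ∑ i, lam t i ≤ 1 / ρt)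
    (f : ℕ → X → ℝ) (g : ℕ → Fin m → X → ℝ)
    (hfm : ∀ t, Measurable (f t)) (hf01 : ∀ t y, f t y ∈ Set.Icc (0:ℝ) 1)
    (hgm : ∀ t i, Measurable (g t i)) (hg1 : ∀ t i y, g t i y ∈ Set.Icc (-1:ℝ) 1)
    (gbar : Fin m → X → ℝ) (hgbm : ∀ i, Measurable (gbar i))
    (hgb1 : ∀ i y, gbar i y ∈ Set.Icc (-1:ℝ) 1)
    (ξs : ProbabilityMeasure X)
    (hfeas : ∀ i, ∫ y, gbar i y ∂(ξs : Measure X) ≤ 0)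
    (RP RD E : ℝ) (hRP : 0 ≤ RP) (hRD : 0 ≤ RD) (hE : 0 ≤ E)
    -- (i) primal regret bound
    (h1 : ∑ t ∈ Finset.Icc 1 T₁, (f t (x t) - ∑ i, lam t i * g t i (x t)) ≥
          ∑ t ∈ Finset.Icc 1 T₁, ((∫ y, f t y ∂(ξs : Measure X)) -
            ∑ i, lam t i * ∫ y, g t i y ∂(ξs : Measure X)) - (1 + 2 / ρt) * RP)
    -- (ii) dual regret bound
    (h2 : ∀ l : Fin m → ℝ, (∀ i, 0 ≤ l i) → (∑ i, l i ≤ 1 / ρt) →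
          ∑ t ∈ Finset.Icc 1 T₁, ∑ i, lam t i * g t i (x t) ≥
          ∑ t ∈ Finset.Icc 1 T₁, ∑ i, l i * g t i (x t) - RD / ρt)
    -- (iii) either the play phase lasts the whole horizon or some constraint is violated a lot
    (h3 : T₁ = T ∨ ∃ i, ((T : ℝ) - (T₁ : ℝ)) * ρt ≤ ∑ t ∈ Finset.Icc 1 T₁, g t i (x t))
    -- (iv) concentration of the constraints at ξ*
    (h4 : ∑ t ∈ Finset.Icc 1 T₁, ∑ i, lam t i * ∫ y, g t i y ∂(ξs : Measure X) ≤
          ∑ t ∈ Finset.Icc 1 T₁, ∑ i, lam t i * ∫ y, gbar i y ∂(ξs : Measure X) + E / ρt) :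
    ∑ t ∈ Finset.Icc 1 T₁, f t (x t) ≥
      ∑ t ∈ Finset.Icc 1 T₁, (∫ y, f t y ∂(ξs : Measure X)) + ((T : ℝ) - (T₁ : ℝ))
        - E / ρt - (1 + 2 / ρt) * RP - RD / ρt :=
  statement4_general T T₁ ρt hρt x lam hlam f g gbar ξs hfeas RP RD E h1 h2 h3 h4
end

section
/- (Recovery-phase violation bound, stochastic constraints.) Let T, T₁ ∈ ℕ with T₁ ≤ T, let ρ ∈ ℝ, and let x_{T₁+1},…,x_T ∈ X, λ_{T₁+1},…,λ_T ∈ Δ_m, constraint functions g_t : X → [−1,1]^m, a measurable ḡ : X → [−1,1]^m, ξ° ∈ Ξ with ḡ_i(ξ°) ≤ −ρ for all i ∈ [m], and constants R^P, R^D, E ≥ 0. Assume: (i) Σ_{t=T₁+1}^{T} (−⟨λ_t, g_t(x_t)⟩) ≥ Σ_{t=T₁+1}^{T} (−⟨λ_t, g_t(ξ°)⟩) − 2·R^P; (ii) for every λ ∈ Δ_m, Σ_{t=T₁+1}^{T} ⟨λ_t, g_t(x_t)⟩ ≥ Σ_{t=T₁+1}^{T} ⟨λ, g_t(x_t)⟩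 − R^D; (iii) Σ_{t=T₁+1}^{T} ⟨λ_t, g_t(ξ°)⟩ ≤ Σ_{t=T₁+1}^{T} ⟨λ_t, ḡ(ξ°)⟩ + E. Then for every i ∈ [m], Σ_{t=T₁+1}^{T} g_{t,i}(x_t) ≤ −(T − T₁)·ρ + 2·R^P + R^D + E. -/
/-! Comparing the dual iterates with the vertex `e_i` of the simplex bounds the `i`-th violation
by the Lagrangian `∑ ⟨λ_t, g_t(x_t)⟩ + R^D`; the primal regret and the concentration bound move
this to `∑ ⟨λ_t, ḡ(ξ°)⟩ + 2 R^P + R^D + E`, and each term of that sum is at most `-ρ` because it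
averages the values `ḡ_j(ξ°) ≤ -ρ` with simplex weights. -/

open MeasureTheory Finset

lemma weighted_sum_le_of_le {ι : Type*} {s : Finset ι} {w a : ι → ℝ} {c : ℝ}
    (hw : ∀ i ∈ s, 0 ≤ w i) (hw1 : ∑ i ∈ s, w i = 1) (ha : ∀ i ∈ s, a i ≤ c) :
    ∑ i ∈ s, w i * a i ≤ c :=
  calc ∑ i ∈ s, w i * a i ≤ ∑ i ∈ s, w i * c :=
        sum_le_sum fun i hi => mul_le_mul_of_nonneg_left (ha i hi) (hw i hi)
    _ = c := by rw [← sum_mul, hw1, one_mul]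

lemma sum_Icc_succ_le_mul {T₁ T : ℕ} (hTT : T₁ ≤ T) {f : ℕ → ℝ} {c : ℝ}
    (hf : ∀ t ∈ Icc (T₁ + 1) T, f t ≤ c) :
    ∑ t ∈ Icc (T₁ + 1) T, f t ≤ ((T : ℝ) - T₁) * c := by
  have hcard : (#(Icc (T₁ + 1) T) : ℝ) = (T : ℝ) - T₁ := by
    rw [Nat.card_Icc, Nat.add_sub_add_right, Nat.cast_sub hTT]
  calc ∑ t ∈ Icc (T₁ + 1) T, f t ≤ #(Icc (T₁ + 1) T) • c := sum_le_card_nsmul _ f c hf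
    _ = ((T : ℝ) - T₁) * c := by rw [nsmul_eq_mul, hcard]

lemma sum_pi_single_one_mul {ι R : Type*} [Fintype ι] [DecidableEq ι] [NonAssocSemiring R]
    (i : ι) (a : ι → R) :
    ∑ j, (Pi.single i (1 : R) : ι → R) j * a j = a i := by
  simp [Pi.single_apply]

theorem statement5_general {X : Type} [MeasurableSpace X] {m : ℕ}
    (T T₁ : ℕ) (hTT : T₁ ≤ T)
    (ρ : ℝ)
    (x : ℕ → X) (lam : ℕ → Fin m → ℝ)
    -- the dual iterates lie in the simplex `Δ_m`
    (hlam : ∀ t ∈ Finset.Icc (T₁ + 1) T, (∀ i, 0 ≤ lam t i) ∧ ∑ i, lam t i = 1)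
    (g : ℕ → Fin m → X → ℝ)
    (gbar : Fin m → X → ℝ)
    (ξo : ProbabilityMeasure X)
    (hfeas : ∀ i, ∫ y, gbar i y ∂(ξo : Measure X) ≤ -ρ)
    (RP RD E : ℝ)
    -- (i) primal regret bound in the recovery phase
    (h1 : ∑ t ∈ Finset.Icc (T₁ + 1) T, (-(∑ i, lam t i * g t i (x t))) ≥
          ∑ t ∈ Finset.Icc (T₁ + 1) T,
            (-(∑ i, lam t i * ∫ y, g t i y ∂(ξo : Measure X))) - 2 * RP)
    -- (ii) dual regret bound in the recovery phase
    (h2 : ∀ l : Fin m → ℝ, (∀ i, 0 ≤ l i) → (∑ i, l i = 1) →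
          ∑ t ∈ Finset.Icc (T₁ + 1) T, ∑ i, lam t i * g t i (x t) ≥
          ∑ t ∈ Finset.Icc (T₁ + 1) T, ∑ i, l i * g t i (x t) - RD)
    -- (iii) concentration of the constraints at ξ°
    (h3 : ∑ t ∈ Finset.Icc (T₁ + 1) T, ∑ i, lam t i * ∫ y, g t i y ∂(ξo : Measure X) ≤
          ∑ t ∈ Finset.Icc (T₁ + 1) T, ∑ i, lam t i * ∫ y, gbar i y ∂(ξo : Measure X) + E) :
    ∀ i, ∑ t ∈ Finset.Icc (T₁ + 1) T, g t i (x t) ≤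
      -(((T : ℝ) - (T₁ : ℝ)) * ρ) + 2 * RP + RD + E := by
  intro i
  have hdual := h2 (Pi.single i 1) (fun j => by by_cases h : j = i <;> simp [h]) (by simp)
  simp only [sum_pi_single_one_mul] at hdual
  have hbar : ∑ t ∈ Icc (T₁ + 1) T, ∑ j, lam t j * ∫ y, gbar j y ∂(ξo : Measure X) ≤
      ((T : ℝ) - T₁) * (-ρ) :=
    sum_Icc_succ_le_mul hTT fun t ht =>
      weighted_sum_le_of_le (fun j _ => (hlam t ht).1 j) (hlam t ht).2 fun j _ => hfeas j
  simp only [sum_neg_distrib] at h1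
  linarith

/-- Recovery-phase violation bound with stochastic constraints (Lemma: small violation). -/
theorem statement5 {X : Type} [MeasurableSpace X] {m : ℕ} (hm : 0 < m)
    (T T₁ : ℕ) (hTT : T₁ ≤ T)
    (ρ : ℝ)
    (x : ℕ → X) (lam : ℕ → Fin m → ℝ)
    -- the dual iterates lie in the simplex `Δ_m`
    (hlam : ∀ t ∈ Finset.Icc (T₁ + 1) T, (∀ i, 0 ≤ lam t i) ∧ ∑ i, lam t i = 1)
    (g : ℕ → Fin m → X → ℝ)
    (hgm : ∀ t i, Measurable (g t i)) (hg1 : ∀ t i y, g t i y ∈ Set.Icc (-1:ℝ) 1)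
    (gbar : Fin m → X → ℝ) (hgbm : ∀ i, Measurable (gbar i))
    (hgb1 : ∀ i y, gbar i y ∈ Set.Icc (-1:ℝ) 1)
    (ξo : ProbabilityMeasure X)
    (hfeas : ∀ i, ∫ y, gbar i y ∂(ξo : Measure X) ≤ -ρ)
    (RP RD E : ℝ) (hRP : 0 ≤ RP) (hRD : 0 ≤ RD) (hE : 0 ≤ E)
    -- (i) primal regret bound in the recovery phase
    (h1 : ∑ t ∈ Finset.Icc (T₁ + 1) T, (-(∑ i, lam t i * g t i (x t))) ≥
          ∑ t ∈ Finset.Icc (T₁ + 1) T,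
            (-(∑ i, lam t i * ∫ y, g t i y ∂(ξo : Measure X))) - 2 * RP)
    -- (ii) dual regret bound in the recovery phase
    (h2 : ∀ l : Fin m → ℝ, (∀ i, 0 ≤ l i) → (∑ i, l i = 1) →
          ∑ t ∈ Finset.Icc (T₁ + 1) T, ∑ i, lam t i * g t i (x t) ≥
          ∑ t ∈ Finset.Icc (T₁ + 1) T, ∑ i, l i * g t i (x t) - RD)
    -- (iii) concentration of the constraints at ξ°
    (h3 : ∑ t ∈ Finset.Icc (T₁ + 1) T, ∑ i, lam t i * ∫ y, g t i y ∂(ξo : Measure X) ≤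
          ∑ t ∈ Finset.Icc (T₁ + 1) T, ∑ i, lam t i * ∫ y, gbar i y ∂(ξo : Measure X) + E) :
    ∀ i, ∑ t ∈ Finset.Icc (T₁ + 1) T, g t i (x t) ≤
      -(((T : ℝ) - (T₁ : ℝ)) * ρ) + 2 * RP + RD + E :=
  statement5_general T T₁ hTT ρ x lam hlam g gbar ξo hfeas RP RD E h1 h2 h3
end

section
/- (Deterministic core of the main guarantee with adversarial rewards and stochastic constraints, under the Slater-type condition.) Let T, T₁ ∈ ℕ with 1 ≤ T₁ ≤ T, let 0 < ρ̃ ≤ ρ, and let x_1,…,x_T ∈ X, λ_1,…,λ_{T₁} ∈ D_{ρ̃}, λ_{T₁+1},…,λ_T ∈ Δ_m, reward functions f_t : X → [0,1], constraint functions g_t : X → [−1,1]^m, a measurable ḡ : X → [−1,1]^m, ξ*, ξ° ∈ Ξ with ḡ_i(ξ*) ≤ 0 and ḡ_i(ξ°) ≤ −ρ for all i ∈ [m], and constants M, R^P₁, R^D₁, R^P₂, R^D₂, E ≥ 0. Assume: (i) Σ_{t=1}^{T₁}(f_t(x_t) − ⟨λ_t,g_t(x_t)⟩) ≥ Σ_{t=1}^{T₁}(f_t(ξ*)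 − ⟨λ_t,g_t(ξ*)⟩) − (1+2/ρ̃)R^P₁; (ii) for every λ ∈ D_{ρ̃}, Σ_{t=1}^{T₁}⟨λ_t,g_t(x_t)⟩ ≥ Σ_{t=1}^{T₁}⟨λ,g_t(x_t)⟩ − R^D₁/ρ̃; (iii) either T₁ = T or max_i Σ_{t=1}^{T₁} g_{t,i}(x_t) ≥ (T−T₁)ρ̃; (iv) for every i, Σ_{t=1}^{T₁} g_{t,i}(x_t) ≤ (T−T₁)ρ̃ + M; (v) Σ_{t=1}^{T₁}⟨λ_t,g_t(ξ*)⟩ ≤ Σ_{t=1}^{T₁}⟨λ_t,ḡ(ξ*)⟩ + E/ρ̃ and Σ_{t=T₁+1}^{T}⟨λ_t,g_t(ξ°)⟩ ≤ Σ_{t=T₁+1}^{T}⟨λ_t,ḡ(ξ°)⟩ + E; (vi) Σ_{t=T₁+1}^{T}(−⟨λ_t,g_t(x_t)⟩) ≥ Σ_{t=T₁+1}^{T}(−⟨λ_t,g_t(ξ°)⟩) − 2R^P₂; (vii) for every λ ∈ Δ_m, Σ_{t=T₁+1}^{T}⟨λ_t,g_t(x_t)⟩ ≥ Σ_{t=T₁+1}^{T}⟨λ,g_t(x_t)⟩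 − R^D₂. Then: Σ_{t=1}^{T} f_t(x_t) ≥ Σ_{t=1}^{T} f_t(ξ*) − E/ρ̃ − (1+2/ρ̃)R^P₁ − R^D₁/ρ̃, and for every i ∈ [m], Σ_{t=1}^{T} g_{t,i}(x_t) ≤ M + 2R^P₂ + R^D₂ + E. -/
open MeasureTheory Finset

/-!
Both phases are analysed through the Lagrangian. In the play phase, feasibility of `ξ*` makes its
Lagrangian cost `∑ ⟨λ_t, g_t(ξ*)⟩` at most `E / ρ̃`, while the dual regret against the vertex
`eᵢ / ρ̃` of `D_{ρ̃}` (with `i` the coordinate that stopped the play phase) shows that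
`∑ ⟨λ_t, g_t(x_t)⟩` is at least `T - T₁` up to `R^D₁ / ρ̃`: this pays for the rewards of `ξ*`
(each at most `1`) lost during the `T - T₁` recovery rounds. In the recovery phase, the strictly
feasible `ξ°` has cost at most `-ρ ≤ -ρ̃` per round, and the dual regret against the vertex `eᵢ`
of `Δ_m` turns this into a decrease of `(T - T₁) ρ̃` of the `i`-th violation, which cancels the
threshold of the play phase.
-/

theorem Finset.sum_Icc_consecutive {M : Type*} [AddCommMonoid M] (h : ℕ → M) {a b c : ℕ}
    (hab : a ≤ b + 1) (hbc : b ≤ c) :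
    ∑ t ∈ Icc a b, h t + ∑ t ∈ Icc (b + 1) c, h t = ∑ t ∈ Icc a c, h t := by
  simpa only [Ico_add_one_right_eq_Icc] using sum_Ico_consecutive h hab (Nat.add_le_add_right hbc 1)

section Lagrangian

variable {ι κ : Type*} [Fintype ι] {s : Finset κ} {lam u : κ → ι → ℝ}

theorem sum_sum_mul_nonpos (hlam : ∀ t ∈ s, ∀ i, 0 ≤ lam t i) {v : ι → ℝ} (hv : ∀ i, v i ≤ 0) :
    ∑ t ∈ s, ∑ i, lam t i * v i ≤ 0 :=
  sum_nonpos fun t ht => sum_nonpos fun i _ => mul_nonpos_of_nonneg_of_nonpos (hlam t ht i) (hv i)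

theorem sum_sum_mul_le_card_mul (hlam : ∀ t ∈ s, (∀ i, 0 ≤ lam t i) ∧ ∑ i, lam t i = 1)
    {v : ι → ℝ} {c : ℝ} (hv : ∀ i, v i ≤ c) :
    ∑ t ∈ s, ∑ i, lam t i * v i ≤ #s * c := by
  rw [← nsmul_eq_mul]
  refine sum_le_card_nsmul s _ c fun t ht => ?_
  calc ∑ i, lam t i * v i ≤ ∑ i, lam t i * c := by
        gcongr with i
        exacts [(hlam t ht).1 i, hv i]
    _ = c := by rw [← sum_mul, (hlam t ht).2, one_mul]

theorem neg_div_le_of_regret_scaledSimplex {c R : ℝ} (hc : 0 ≤ c)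
    (hreg : ∀ l : ι → ℝ, (∀ i, 0 ≤ l i) → ∑ i, l i ≤ 1 / c →
      ∑ t ∈ s, ∑ i, lam t i * u t i ≥ ∑ t ∈ s, ∑ i, l i * u t i - R / c) :
    -(R / c) ≤ ∑ t ∈ s, ∑ i, lam t i * u t i := by
  simpa using hreg 0 (fun _ => le_rfl) (by simp [hc])

theorem sum_div_sub_le_of_regret_scaledSimplex [DecidableEq ι] {c R : ℝ} (hc : 0 ≤ c)
    (hreg : ∀ l : ι → ℝ, (∀ i, 0 ≤ l i) → ∑ i, l i ≤ 1 / c →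
      ∑ t ∈ s, ∑ i, lam t i * u t i ≥ ∑ t ∈ s, ∑ i, l i * u t i - R / c) (i : ι) :
    (∑ t ∈ s, u t i) / c - R / c ≤ ∑ t ∈ s, ∑ i, lam t i * u t i := by
  have hl : (0 : ι → ℝ) ≤ Pi.single i (1 / c) := Pi.single_nonneg.2 (by positivity)
  simpa [Pi.single_apply, div_eq_inv_mul, mul_sum] using hreg _ hl (by simp)

theorem sum_sub_le_of_regret_simplex [DecidableEq ι] {R : ℝ}
    (hreg : ∀ l : ι → ℝ, (∀ i, 0 ≤ l i) → ∑ i, l i = 1 →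
      ∑ t ∈ s, ∑ i, lam t i * u t i ≥ ∑ t ∈ s, ∑ i, l i * u t i - R) (i : ι) :
    ∑ t ∈ s, u t i - R ≤ ∑ t ∈ s, ∑ i, lam t i * u t i := by
  have hl : (0 : ι → ℝ) ≤ Pi.single i 1 := Pi.single_nonneg.2 zero_le_one
  simpa [Pi.single_apply] using hreg _ hl (by simp)

end Lagrangian

theorem sum_integral_le_card {X κ : Type*} [MeasurableSpace X] (μ : Measure X)
    [IsProbabilityMeasure μ] (s : Finset κ) {f : κ → X → ℝ}
    (hf : ∀ t y, f t y ∈ Set.Icc (0 : ℝ) 1) :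
    ∑ t ∈ s, ∫ y, f t y ∂μ ≤ #s := by
  simpa using sum_le_card_nsmul s _ 1 fun t _ =>
    (integral_mono_of_nonneg (ae_of_all μ (hf t · |>.1)) (integrable_const (1 : ℝ))
      (ae_of_all μ (hf t · |>.2))).trans_eq (by simp)

theorem statement6_general {X : Type} [MeasurableSpace X] {m : ℕ}
    (T T₁ : ℕ) (hTT : T₁ ≤ T)
    (ρt ρ : ℝ) (hρt : 0 < ρt) (hρ : ρt ≤ ρ)
    (x : ℕ → X) (lam : ℕ → Fin m → ℝ)
    -- play-phase duals lie in `D_{ρ̃}`, recovery-phase duals lie in `Δ_m`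
    (hlam1 : ∀ t ∈ Finset.Icc 1 T₁, (∀ i, 0 ≤ lam t i) ∧ ∑ i, lam t i ≤ 1 / ρt)
    (hlam2 : ∀ t ∈ Finset.Icc (T₁ + 1) T, (∀ i, 0 ≤ lam t i) ∧ ∑ i, lam t i = 1)
    (f : ℕ → X → ℝ) (g : ℕ → Fin m → X → ℝ)
    (hf01 : ∀ t y, f t y ∈ Set.Icc (0:ℝ) 1)
    (gbar : Fin m → X → ℝ)
    (ξs ξo : ProbabilityMeasure X)
    (hfeass : ∀ i, ∫ y, gbar i y ∂(ξs : Measure X) ≤ 0)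
    (hfeaso : ∀ i, ∫ y, gbar i y ∂(ξo : Measure X) ≤ -ρ)
    (M RP1 RD1 RP2 RD2 E : ℝ)
    -- (i) play-phase primal regret bound
    (h1 : ∑ t ∈ Finset.Icc 1 T₁, (f t (x t) - ∑ i, lam t i * g t i (x t)) ≥
          ∑ t ∈ Finset.Icc 1 T₁, ((∫ y, f t y ∂(ξs : Measure X)) -
            ∑ i, lam t i * ∫ y, g t i y ∂(ξs : Measure X)) - (1 + 2 / ρt) * RP1)
    -- (ii) play-phase dual regret bound
    (h2 : ∀ l : Fin m → ℝ, (∀ i, 0 ≤ l i) → (∑ i, l i ≤ 1 / ρt) →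
          ∑ t ∈ Finset.Icc 1 T₁, ∑ i, lam t i * g t i (x t) ≥
          ∑ t ∈ Finset.Icc 1 T₁, ∑ i, l i * g t i (x t) - RD1 / ρt)
    -- (iii) stopping condition of the play phase
    (h3 : T₁ = T ∨ ∃ i, ((T : ℝ) - (T₁ : ℝ)) * ρt ≤ ∑ t ∈ Finset.Icc 1 T₁, g t i (x t))
    -- (iv) play-phase violation threshold
    (h4 : ∀ i, ∑ t ∈ Finset.Icc 1 T₁, g t i (x t) ≤ ((T : ℝ) - (T₁ : ℝ)) * ρt + M)
    -- (v) concentration of the constraints at ξ* and ξ°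
    (h5a : ∑ t ∈ Finset.Icc 1 T₁, ∑ i, lam t i * ∫ y, g t i y ∂(ξs : Measure X) ≤
           ∑ t ∈ Finset.Icc 1 T₁, ∑ i, lam t i * ∫ y, gbar i y ∂(ξs : Measure X) + E / ρt)
    (h5b : ∑ t ∈ Finset.Icc (T₁ + 1) T, ∑ i, lam t i * ∫ y, g t i y ∂(ξo : Measure X) ≤
           ∑ t ∈ Finset.Icc (T₁ + 1) T, ∑ i, lam t i * ∫ y, gbar i y ∂(ξo : Measure X) + E)
    -- (vi) recovery-phase primal regret bound
    (h6 : ∑ t ∈ Finset.Icc (T₁ + 1) T, (-(∑ i, lam t i * g t i (x t))) ≥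
          ∑ t ∈ Finset.Icc (T₁ + 1) T,
            (-(∑ i, lam t i * ∫ y, g t i y ∂(ξo : Measure X))) - 2 * RP2)
    -- (vii) recovery-phase dual regret bound
    (h7 : ∀ l : Fin m → ℝ, (∀ i, 0 ≤ l i) → (∑ i, l i = 1) →
          ∑ t ∈ Finset.Icc (T₁ + 1) T, ∑ i, lam t i * g t i (x t) ≥
          ∑ t ∈ Finset.Icc (T₁ + 1) T, ∑ i, l i * g t i (x t) - RD2) :
    (∑ t ∈ Finset.Icc 1 T, f t (x t) ≥
      ∑ t ∈ Finset.Icc 1 T, (∫ y, f t y ∂(ξs : Measure X))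
        - E / ρt - (1 + 2 / ρt) * RP1 - RD1 / ρt) ∧
    (∀ i, ∑ t ∈ Finset.Icc 1 T, g t i (x t) ≤ M + 2 * RP2 + RD2 + E) := by
  have hsplit (h : ℕ → ℝ) := (sum_Icc_consecutive h (Nat.le_add_left 1 T₁) hTT).symm
  have hlen : (#(Icc (T₁ + 1) T) : ℝ) = T - T₁ := by simp [Nat.cast_sub hTT]
  have hcost_s : ∑ t ∈ Icc 1 T₁, ∑ i, lam t i * ∫ y, g t i y ∂(ξs : Measure X) ≤ E / ρt := by
    linarith [sum_sum_mul_nonpos (fun t ht => (hlam1 t ht).1) hfeass]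
  have hcost_o : ∑ t ∈ Icc (T₁ + 1) T, ∑ i, lam t i * ∫ y, g t i y ∂(ξo : Measure X)
      ≤ -((T - T₁) * ρt) + E := by
    have hslater := sum_sum_mul_le_card_mul hlam2 hfeaso
    have hgap : (T - T₁ : ℝ) * ρt ≤ (T - T₁) * ρ :=
      mul_le_mul_of_nonneg_left hρ (sub_nonneg.2 (Nat.cast_le.2 hTT))
    rw [hlen] at hslater
    linarith
  have hdual : (T - T₁ : ℝ) - RD1 / ρt ≤ ∑ t ∈ Icc 1 T₁, ∑ i, lam t i * g t i (x t) := by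
    rcases h3 with rfl | ⟨i, hstop⟩
    · simpa using neg_div_le_of_regret_scaledSimplex hρt.le h2
    · have hstop' : (T - T₁ : ℝ) ≤ (∑ t ∈ Icc 1 T₁, g t i (x t)) / ρt :=
        (le_div_iff₀ hρt).2 hstop
      linarith [sum_div_sub_le_of_regret_scaledSimplex hρt.le h2 i]
  refine ⟨?_, fun i => ?_⟩
  · have hf_rec := sum_integral_le_card (ξs : Measure X) (Icc (T₁ + 1) T) hf01
    have hfx_rec : 0 ≤ ∑ t ∈ Icc (T₁ + 1) T, f t (x t) := sum_nonneg fun t _ => (hf01 t _).1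
    rw [sum_sub_distrib, sum_sub_distrib] at h1
    rw [hsplit, hsplit]
    linarith
  · rw [sum_neg_distrib, sum_neg_distrib] at h6
    rw [hsplit]
    linarith [h4 i, sum_sub_le_of_regret_simplex h7 i]

/-- Deterministic core of the main guarantee with adversarial rewards and stochastic
constraints, under the Slater-type condition (`0 < ρ̃ ≤ ρ`). -/
theorem statement6 {X : Type} [MeasurableSpace X] {m : ℕ} (hm : 0 < m)
    (T T₁ : ℕ) (hT₁ : 1 ≤ T₁) (hTT : T₁ ≤ T)
    (ρt ρ : ℝ) (hρt : 0 < ρt) (hρ : ρt ≤ ρ)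
    (x : ℕ → X) (lam : ℕ → Fin m → ℝ)
    -- play-phase duals lie in `D_{ρ̃}`, recovery-phase duals lie in `Δ_m`
    (hlam1 : ∀ t ∈ Finset.Icc 1 T₁, (∀ i, 0 ≤ lam t i) ∧ ∑ i, lam t i ≤ 1 / ρt)
    (hlam2 : ∀ t ∈ Finset.Icc (T₁ + 1) T, (∀ i, 0 ≤ lam t i) ∧ ∑ i, lam t i = 1)
    (f : ℕ → X → ℝ) (g : ℕ → Fin m → X → ℝ)
    (hfm : ∀ t, Measurable (f t)) (hf01 : ∀ t y, f t y ∈ Set.Icc (0:ℝ) 1)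
    (hgm : ∀ t i, Measurable (g t i)) (hg1 : ∀ t i y, g t i y ∈ Set.Icc (-1:ℝ) 1)
    (gbar : Fin m → X → ℝ) (hgbm : ∀ i, Measurable (gbar i))
    (hgb1 : ∀ i y, gbar i y ∈ Set.Icc (-1:ℝ) 1)
    (ξs ξo : ProbabilityMeasure X)
    (hfeass : ∀ i, ∫ y, gbar i y ∂(ξs : Measure X) ≤ 0)
    (hfeaso : ∀ i, ∫ y, gbar i y ∂(ξo : Measure X) ≤ -ρ)
    (M RP1 RD1 RP2 RD2 E : ℝ)
    (hM : 0 ≤ M) (hRP1 : 0 ≤ RP1) (hRD1 : 0 ≤ RD1) (hRP2 : 0 ≤ RP2) (hRD2 : 0 ≤ RD2)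
    (hE : 0 ≤ E)
    -- (i) play-phase primal regret bound
    (h1 : ∑ t ∈ Finset.Icc 1 T₁, (f t (x t) - ∑ i, lam t i * g t i (x t)) ≥
          ∑ t ∈ Finset.Icc 1 T₁, ((∫ y, f t y ∂(ξs : Measure X)) -
            ∑ i, lam t i * ∫ y, g t i y ∂(ξs : Measure X)) - (1 + 2 / ρt) * RP1)
    -- (ii) play-phase dual regret bound
    (h2 : ∀ l : Fin m → ℝ, (∀ i, 0 ≤ l i) → (∑ i, l i ≤ 1 / ρt) →
          ∑ t ∈ Finset.Icc 1 T₁, ∑ i, lam t i * g t i (x t) ≥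
          ∑ t ∈ Finset.Icc 1 T₁, ∑ i, l i * g t i (x t) - RD1 / ρt)
    -- (iii) stopping condition of the play phase
    (h3 : T₁ = T ∨ ∃ i, ((T : ℝ) - (T₁ : ℝ)) * ρt ≤ ∑ t ∈ Finset.Icc 1 T₁, g t i (x t))
    -- (iv) play-phase violation threshold
    (h4 : ∀ i, ∑ t ∈ Finset.Icc 1 T₁, g t i (x t) ≤ ((T : ℝ) - (T₁ : ℝ)) * ρt + M)
    -- (v) concentration of the constraints at ξ* and ξ°
    (h5a : ∑ t ∈ Finset.Icc 1 T₁, ∑ i, lam t i * ∫ y, g t i y ∂(ξs : Measure X) ≤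
           ∑ t ∈ Finset.Icc 1 T₁, ∑ i, lam t i * ∫ y, gbar i y ∂(ξs : Measure X) + E / ρt)
    (h5b : ∑ t ∈ Finset.Icc (T₁ + 1) T, ∑ i, lam t i * ∫ y, g t i y ∂(ξo : Measure X) ≤
           ∑ t ∈ Finset.Icc (T₁ + 1) T, ∑ i, lam t i * ∫ y, gbar i y ∂(ξo : Measure X) + E)
    -- (vi) recovery-phase primal regret bound
    (h6 : ∑ t ∈ Finset.Icc (T₁ + 1) T, (-(∑ i, lam t i * g t i (x t))) ≥
          ∑ t ∈ Finset.Icc (T₁ + 1) T,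
            (-(∑ i, lam t i * ∫ y, g t i y ∂(ξo : Measure X))) - 2 * RP2)
    -- (vii) recovery-phase dual regret bound
    (h7 : ∀ l : Fin m → ℝ, (∀ i, 0 ≤ l i) → (∑ i, l i = 1) →
          ∑ t ∈ Finset.Icc (T₁ + 1) T, ∑ i, lam t i * g t i (x t) ≥
          ∑ t ∈ Finset.Icc (T₁ + 1) T, ∑ i, l i * g t i (x t) - RD2) :
    (∑ t ∈ Finset.Icc 1 T, f t (x t) ≥
      ∑ t ∈ Finset.Icc 1 T, (∫ y, f t y ∂(ξs : Measure X))
        - E / ρt - (1 + 2 / ρt) * RP1 - RD1 / ρt) ∧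
    (∀ i, ∑ t ∈ Finset.Icc 1 T, g t i (x t) ≤ M + 2 * RP2 + RD2 + E) :=
  statement6_general T T₁ hTT ρt ρ hρt hρ x lam hlam1 hlam2 f g hf01 gbar ξs ξo hfeass hfeaso M RP1
    RD1 RP2 RD2 E h1 h2 h3 h4 h5a h5b h6 h7
end

section
/- (Lower bound on the cumulative Lagrangian value of the primal player, fully stochastic setting.) Let τ ∈ ℕ with τ ≥ 1, ρ̃ > 0, and let x_1,…,x_τ ∈ X, λ_1,…,λ_τ ∈ D_{ρ̃}, reward functions f_t : X → [0,1], constraint functions g_t : X → [−1,1]^m, measurable f̄ : X → [0,1] and ḡ : X → [−1,1]^m, ξ* ∈ Ξ with ḡ_i(ξ*) ≤ 0 for all i and f̄(ξ*) = OPT_{f̄,ḡ}, and constants R^P, E ≥ 0. Assume: (i) Σ_{t=1}^{τ}(f_t(x_t) − ⟨λ_t,g_t(x_t)⟩) ≥ Σ_{t=1}^{τ}(f_t(ξ*) − ⟨λ_t,g_t(ξ*)⟩) − (1+2/ρ̃)R^P; (ii) |Σ_{t=1}^{τ} f_t(ξ*) − τ·f̄(ξ*)| ≤ E; (iii) |Σ_{t=1}^{τ}⟨λ_t,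 g_t(ξ*)⟩ − Σ_{t=1}^{τ}⟨λ_t, ḡ(ξ*)⟩| ≤ E/ρ̃. Then Σ_{t=1}^{τ}(f_t(x_t) − ⟨λ_t,g_t(x_t)⟩) ≥ τ·OPT_{f̄,ḡ} − (1+2/ρ̃)R^P − (1+1/ρ̃)E. -/
open MeasureTheory Finset

theorem sum_sum_mul_nonpos_of_nonneg_of_nonpos {κ ι : Type*} [Fintype ι] {s : Finset κ}
    {lam : κ → ι → ℝ} {c : ι → ℝ} (hlam : ∀ t ∈ s, ∀ i, 0 ≤ lam t i) (hc : ∀ i, c i ≤ 0) :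
    ∑ t ∈ s, ∑ i, lam t i * c i ≤ 0 :=
  sum_nonpos fun t ht ↦ sum_nonpos fun i _ ↦ mul_nonpos_of_nonneg_of_nonpos (hlam t ht i) (hc i)

theorem statement8_general {X : Type} [MeasurableSpace X] {m : ℕ}
    (τ : ℕ)
    (ρt : ℝ)
    (x : ℕ → X) (lam : ℕ → Fin m → ℝ)
    -- the dual iterates lie in `D_{ρ̃}`
    (hlam : ∀ t ∈ Finset.Icc 1 τ, (∀ i, 0 ≤ lam t i) ∧ ∑ i, lam t i ≤ 1 / ρt)
    (f : ℕ → X → ℝ) (g : ℕ → Fin m → X → ℝ)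
    (fbar : X → ℝ)
    (gbar : Fin m → X → ℝ)
    (ξs : ProbabilityMeasure X)
    (hfeas : ∀ i, ∫ y, gbar i y ∂(ξs : Measure X) ≤ 0)
    (hopt : (∫ y, fbar y ∂(ξs : Measure X)) = OPTval fbar gbar)
    (RP E : ℝ)
    -- (i) primal regret bound
    (h1 : ∑ t ∈ Finset.Icc 1 τ, (f t (x t) - ∑ i, lam t i * g t i (x t)) ≥
          ∑ t ∈ Finset.Icc 1 τ, ((∫ y, f t y ∂(ξs : Measure X)) -
            ∑ i, lam t i * ∫ y, g t i y ∂(ξs : Measure X)) - (1 + 2 / ρt) * RP)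
    -- (ii) concentration of rewards at ξ*
    (h2 : |∑ t ∈ Finset.Icc 1 τ, (∫ y, f t y ∂(ξs : Measure X)) -
            (τ : ℝ) * ∫ y, fbar y ∂(ξs : Measure X)| ≤ E)
    -- (iii) concentration of the constraints at ξ*
    (h3 : |∑ t ∈ Finset.Icc 1 τ, ∑ i, lam t i * ∫ y, g t i y ∂(ξs : Measure X) -
            ∑ t ∈ Finset.Icc 1 τ, ∑ i, lam t i * ∫ y, gbar i y ∂(ξs : Measure X)| ≤ E / ρt) :
    ∑ t ∈ Finset.Icc 1 τ, (f t (x t) - ∑ i, lam t i * g t i (x t)) ≥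
      (τ : ℝ) * OPTval fbar gbar - (1 + 2 / ρt) * RP - (1 + 1 / ρt) * E := by
  have hpenalty : ∑ t ∈ Icc 1 τ, ∑ i, lam t i * ∫ y, gbar i y ∂(ξs : Measure X) ≤ 0 :=
    sum_sum_mul_nonpos_of_nonneg_of_nonpos (fun t ht ↦ (hlam t ht).1) hfeas
  have hsplit := sum_sub_distrib (s := Icc 1 τ) (fun t ↦ ∫ y, f t y ∂(ξs : Measure X))
    (fun t ↦ ∑ i, lam t i * ∫ y, g t i y ∂(ξs : Measure X))
  have hE : (1 + 1 / ρt) * E = E + E / ρt := by ring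
  rw [← hopt]
  linarith [abs_le.mp h2, abs_le.mp h3]

/-- Lower bound on the cumulative Lagrangian value of the primal player in the fully
stochastic setting. -/
theorem statement8 {X : Type} [MeasurableSpace X] {m : ℕ} (hm : 0 < m)
    (τ : ℕ) (hτ : 1 ≤ τ)
    (ρt : ℝ) (hρt : 0 < ρt)
    (x : ℕ → X) (lam : ℕ → Fin m → ℝ)
    -- the dual iterates lie in `D_{ρ̃}`
    (hlam : ∀ t ∈ Finset.Icc 1 τ, (∀ i, 0 ≤ lam t i) ∧ ∑ i, lam t i ≤ 1 / ρt)
    (f : ℕ → X → ℝ) (g : ℕ → Fin m → X → ℝ)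
    (hfm : ∀ t, Measurable (f t)) (hf01 : ∀ t y, f t y ∈ Set.Icc (0:ℝ) 1)
    (hgm : ∀ t i, Measurable (g t i)) (hg1 : ∀ t i y, g t i y ∈ Set.Icc (-1:ℝ) 1)
    (fbar : X → ℝ) (hfbm : Measurable fbar) (hfb01 : ∀ y, fbar y ∈ Set.Icc (0:ℝ) 1)
    (gbar : Fin m → X → ℝ) (hgbm : ∀ i, Measurable (gbar i))
    (hgb1 : ∀ i y, gbar i y ∈ Set.Icc (-1:ℝ) 1)
    (ξs : ProbabilityMeasure X)
    (hfeas : ∀ i, ∫ y, gbar i y ∂(ξs : Measure X) ≤ 0)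
    (hopt : (∫ y, fbar y ∂(ξs : Measure X)) = OPTval fbar gbar)
    (RP E : ℝ) (hRP : 0 ≤ RP) (hE : 0 ≤ E)
    -- (i) primal regret bound
    (h1 : ∑ t ∈ Finset.Icc 1 τ, (f t (x t) - ∑ i, lam t i * g t i (x t)) ≥
          ∑ t ∈ Finset.Icc 1 τ, ((∫ y, f t y ∂(ξs : Measure X)) -
            ∑ i, lam t i * ∫ y, g t i y ∂(ξs : Measure X)) - (1 + 2 / ρt) * RP)
    -- (ii) concentration of rewards at ξ*
    (h2 : |∑ t ∈ Finset.Icc 1 τ, (∫ y, f t y ∂(ξs : Measure X)) -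
            (τ : ℝ) * ∫ y, fbar y ∂(ξs : Measure X)| ≤ E)
    -- (iii) concentration of the constraints at ξ*
    (h3 : |∑ t ∈ Finset.Icc 1 τ, ∑ i, lam t i * ∫ y, g t i y ∂(ξs : Measure X) -
            ∑ t ∈ Finset.Icc 1 τ, ∑ i, lam t i * ∫ y, gbar i y ∂(ξs : Measure X)| ≤ E / ρt) :
    ∑ t ∈ Finset.Icc 1 τ, (f t (x t) - ∑ i, lam t i * g t i (x t)) ≥
      (τ : ℝ) * OPTval fbar gbar - (1 + 2 / ρt) * RP - (1 + 1 / ρt) * E :=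
  statement8_general τ ρt x lam hlam f g fbar gbar ξs hfeas hopt RP E h1 h2 h3
end

section
/- (Play-phase reward bound with adversarial constraints.) Let T, T₁ ∈ ℕ with 1 ≤ T₁ ≤ T, let ρ̃ > 0 and ρ ≥ 0, and let x_1,…,x_{T₁} ∈ X, λ_1,…,λ_{T₁} ∈ D_{ρ̃}, reward functions f_t : X → [0,1], constraint functions g_t : X → [−1,1]^m, measures ξ*, ξ° ∈ Ξ such that g_{t,i}(ξ°) ≤ −ρ for all t ∈ [T] and i ∈ [m], and constants R^P, R^D ≥ 0. Assume: (i) for every ξ ∈ Ξ, Σ_{t=1}^{T₁}(f_t(x_t) − ⟨λ_t,g_t(x_t)⟩) ≥ Σ_{t=1}^{T₁}(f_t(ξ) − ⟨λ_t,g_t(ξ)⟩) − (1+2/ρ̃)R^P; (ii) for every λ ∈ D_{ρ̃}, Σ_{t=1}^{T₁}⟨λ_t,g_t(x_t)⟩ ≥ Σ_{t=1}^{T₁}⟨λ,g_t(x_t)⟩ − R^D/ρ̃; (iii) either T₁ = T, or max_{i∈[m]} Σ_{t=1}^{T₁} g_{t,i}(x_t) ≥ (T−T₁)ρ̃. Then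 Σ_{t=1}^{T₁} f_t(x_t) ≥ (ρ/(1+ρ))·Σ_{t=1}^{T₁} f_t(ξ*) + (T − T₁) − (1+2/ρ̃)R^P − R^D/ρ̃. -/
/-!
Compare the play against the mixture `ξ = ξ°/(1+ρ) + ρ ξ*/(1+ρ)`. The weights are chosen so that
`ξ` satisfies every round's constraints (`-ρ/(1+ρ) + ρ/(1+ρ) = 0`), hence the Lagrangian penalty
of `ξ` is nonpositive and its reward is at least `ρ/(1+ρ)` times that of `ξ*`; this is fed into
the primal regret bound. In the dual regret bound, either `T₁ = T` and the comparator `0`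
suffices, or some constraint `i` has accumulated violation at least `(T - T₁) ρ̃`, and the
comparator `e_i / ρ̃` turns it into a gain of `T - T₁`.
-/

open MeasureTheory Finset unitInterval

namespace MeasureTheory.ProbabilityMeasure

variable {X : Type*} [MeasurableSpace X]

noncomputable def mixture (p : I) (μ ν : ProbabilityMeasure X) : ProbabilityMeasure X :=
  ⟨toNNReal p • (μ : Measure X) + toNNReal (σ p) • (ν : Measure X), inferInstance⟩

theorem integral_mixture (p : I) (μ ν : ProbabilityMeasure X) {h : X → ℝ}
    (hμ : Integrable h μ) (hν : Integrable h ν) :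
    ∫ y, h y ∂(mixture p μ ν : Measure X) =
      p * ∫ y, h y ∂(μ : Measure X) + (1 - p) * ∫ y, h y ∂(ν : Measure X) := by
  rw [mixture, ProbabilityMeasure.coe_mk, integral_add_measure hμ.smul_measure_nnreal
    hν.smul_measure_nnreal, integral_smul_nnreal_measure, integral_smul_nnreal_measure,
    NNReal.smul_def, NNReal.smul_def, coe_toNNReal, coe_toNNReal, coe_symm_eq, smul_eq_mul,
    smul_eq_mul]

theorem integral_le_one (μ : ProbabilityMeasure X) {h : X → ℝ} (hm : Measurable h)
    (h1 : ∀ y, h y ∈ Set.Icc (-1 : ℝ) 1) : ∫ y, h y ∂(μ : Measure X) ≤ 1 := by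
  have hint : Integrable h μ := .of_mem_Icc (-1) 1 hm.aemeasurable (ae_of_all _ h1)
  simpa using integral_mono hint (integrable_const 1) fun y ↦ (h1 y).2

end MeasureTheory.ProbabilityMeasure

section SlaterMixture

open ProbabilityMeasure

variable {X : Type*} [MeasurableSpace X] {ρ : ℝ}

noncomputable def slaterWeight (hρ : 0 ≤ ρ) : I :=
  ⟨1 / (1 + ρ), by positivity, by rw [div_le_one (by positivity)]; linarith⟩

theorem one_sub_slaterWeight (hρ : 0 ≤ ρ) : 1 - (slaterWeight hρ : ℝ) = ρ / (1 + ρ) := by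
  simp only [slaterWeight]
  field_simp
  ring

theorem integral_slaterMixture_nonpos (hρ : 0 ≤ ρ) (ξs ξo : ProbabilityMeasure X) {g : X → ℝ}
    (hgm : Measurable g) (hg1 : ∀ y, g y ∈ Set.Icc (-1 : ℝ) 1)
    (hfeas : ∫ y, g y ∂(ξo : Measure X) ≤ -ρ) :
    ∫ y, g y ∂(mixture (slaterWeight hρ) ξo ξs : Measure X) ≤ 0 := by
  have hint (μ : ProbabilityMeasure X) : Integrable g μ :=
    .of_mem_Icc (-1) 1 hgm.aemeasurable (ae_of_all _ hg1)
  have hξs := integral_le_one ξs hgm hg1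
  have hp : (slaterWeight hρ : ℝ) = 1 / (1 + ρ) := rfl
  rw [integral_mixture _ _ _ (hint ξo) (hint ξs), one_sub_slaterWeight, hp]
  calc 1 / (1 + ρ) * ∫ y, g y ∂(ξo : Measure X) + ρ / (1 + ρ) * ∫ y, g y ∂(ξs : Measure X)
      ≤ 1 / (1 + ρ) * -ρ + ρ / (1 + ρ) * 1 := by gcongr
    _ = 0 := by ring

theorem mul_integral_le_integral_slaterMixture (hρ : 0 ≤ ρ) (ξs ξo : ProbabilityMeasure X)
    {f : X → ℝ} (hfm : Measurable f) (hf01 : ∀ y, f y ∈ Set.Icc (0 : ℝ) 1) :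
    ρ / (1 + ρ) * ∫ y, f y ∂(ξs : Measure X) ≤
      ∫ y, f y ∂(mixture (slaterWeight hρ) ξo ξs : Measure X) := by
  have hint (μ : ProbabilityMeasure X) : Integrable f μ :=
    .of_mem_Icc 0 1 hfm.aemeasurable (ae_of_all _ hf01)
  rw [integral_mixture _ _ _ (hint ξo) (hint ξs), one_sub_slaterWeight]
  have hξo : 0 ≤ ∫ y, f y ∂(ξo : Measure X) := integral_nonneg fun y ↦ (hf01 y).1
  have hp : 0 ≤ (slaterWeight hρ : ℝ) := (slaterWeight hρ).2.1
  nlinarith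

theorem lagrangian_slaterMixture_ge {ι : Type*} [Fintype ι] (hρ : 0 ≤ ρ)
    (ξs ξo : ProbabilityMeasure X) {f : X → ℝ} {g : ι → X → ℝ} {lam : ι → ℝ}
    (hfm : Measurable f) (hf01 : ∀ y, f y ∈ Set.Icc (0 : ℝ) 1)
    (hgm : ∀ i, Measurable (g i)) (hg1 : ∀ i y, g i y ∈ Set.Icc (-1 : ℝ) 1)
    (hfeas : ∀ i, ∫ y, g i y ∂(ξo : Measure X) ≤ -ρ) (hlam : ∀ i, 0 ≤ lam i) :
    ρ / (1 + ρ) * ∫ y, f y ∂(ξs : Measure X) ≤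
      ∫ y, f y ∂(mixture (slaterWeight hρ) ξo ξs : Measure X) -
        ∑ i, lam i * ∫ y, g i y ∂(mixture (slaterWeight hρ) ξo ξs : Measure X) := by
  have hpenalty : ∑ i, lam i * ∫ y, g i y ∂(mixture (slaterWeight hρ) ξo ξs : Measure X) ≤ 0 :=
    sum_nonpos fun i _ ↦ mul_nonpos_of_nonneg_of_nonpos (hlam i)
      (integral_slaterMixture_nonpos hρ ξs ξo (hgm i) (hg1 i) (hfeas i))
  linarith [mul_integral_le_integral_slaterMixture hρ ξs ξo hfm hf01]

end SlaterMixture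

theorem sub_le_of_simplex_regret {ι : Type*} [Fintype ι] [DecidableEq ι] {q : ℝ} (hq : 0 < q)
    {G : ι → ℝ} {S R c : ℝ}
    (hregret : ∀ l : ι → ℝ, (∀ i, 0 ≤ l i) → ∑ i, l i ≤ 1 / q → ∑ i, l i * G i - R ≤ S)
    (hc : c = 0 ∨ ∃ i, c * q ≤ G i) : c - R ≤ S := by
  rcases hc with rfl | ⟨i, hi⟩
  · simpa using hregret 0 (fun _ ↦ le_rfl) (by simp; positivity)
  · have hl : 0 ≤ Pi.single (M := fun _ ↦ ℝ) i (1 / q) := Pi.single_nonneg.2 (by positivity)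
    have hvertex := hregret (Pi.single i (1 / q)) hl (by simp)
    have hgain : c ≤ 1 / q * G i := by
      rw [one_div, ← div_eq_inv_mul, le_div_iff₀ hq]; exact hi
    simp only [Pi.single_apply, ite_mul, zero_mul, sum_ite_eq', mem_univ, if_true] at hvertex
    linarith

theorem statement11_general {X : Type} [MeasurableSpace X] {m : ℕ}
    (T T₁ : ℕ) (hTT : T₁ ≤ T)
    (ρt ρ : ℝ) (hρt : 0 < ρt) (hρ : 0 ≤ ρ)
    (x : ℕ → X) (lam : ℕ → Fin m → ℝ)
    -- the dual iterates lie in `D_{ρ̃}`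
    (hlam : ∀ t ∈ Finset.Icc 1 T₁, (∀ i, 0 ≤ lam t i) ∧ ∑ i, lam t i ≤ 1 / ρt)
    (f : ℕ → X → ℝ) (g : ℕ → Fin m → X → ℝ)
    (hfm : ∀ t, Measurable (f t)) (hf01 : ∀ t y, f t y ∈ Set.Icc (0:ℝ) 1)
    (hgm : ∀ t i, Measurable (g t i)) (hg1 : ∀ t i y, g t i y ∈ Set.Icc (-1:ℝ) 1)
    (ξs ξo : ProbabilityMeasure X)
    -- ξ° is strictly feasible by margin ρ for every round's constraints
    (hfeaso : ∀ t ∈ Finset.Icc 1 T, ∀ i, ∫ y, g t i y ∂(ξo : Measure X) ≤ -ρ)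
    (RP RD : ℝ)
    -- (i) primal regret bound against every fixed mixture
    (h1 : ∀ ξ : ProbabilityMeasure X,
          ∑ t ∈ Finset.Icc 1 T₁, (f t (x t) - ∑ i, lam t i * g t i (x t)) ≥
          ∑ t ∈ Finset.Icc 1 T₁, ((∫ y, f t y ∂(ξ : Measure X)) -
            ∑ i, lam t i * ∫ y, g t i y ∂(ξ : Measure X)) - (1 + 2 / ρt) * RP)
    -- (ii) dual regret bound
    (h2 : ∀ l : Fin m → ℝ, (∀ i, 0 ≤ l i) → (∑ i, l i ≤ 1 / ρt) →
          ∑ t ∈ Finset.Icc 1 T₁, ∑ i, lam t i * g t i (x t) ≥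
          ∑ t ∈ Finset.Icc 1 T₁, ∑ i, l i * g t i (x t) - RD / ρt)
    -- (iii) stopping condition of the play phase
    (h3 : T₁ = T ∨ ∃ i, ((T : ℝ) - (T₁ : ℝ)) * ρt ≤ ∑ t ∈ Finset.Icc 1 T₁, g t i (x t)) :
    ∑ t ∈ Finset.Icc 1 T₁, f t (x t) ≥
      (ρ / (1 + ρ)) * ∑ t ∈ Finset.Icc 1 T₁, (∫ y, f t y ∂(ξs : Measure X))
        + ((T : ℝ) - (T₁ : ℝ)) - (1 + 2 / ρt) * RP - RD / ρt := by
  set ξ := ProbabilityMeasure.mixture (slaterWeight hρ) ξo ξs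
  have hcomparator : ρ / (1 + ρ) * ∑ t ∈ Icc 1 T₁, ∫ y, f t y ∂(ξs : Measure X) ≤
      ∑ t ∈ Icc 1 T₁, ((∫ y, f t y ∂(ξ : Measure X)) -
        ∑ i, lam t i * ∫ y, g t i y ∂(ξ : Measure X)) := by
    rw [mul_sum]
    exact sum_le_sum fun t ht ↦ lagrangian_slaterMixture_ge hρ ξs ξo (hfm t) (hf01 t) (hgm t)
      (hg1 t) (hfeaso t (Icc_subset_Icc_right hTT ht)) (hlam t ht).1
  have hdual : ((T : ℝ) - T₁) - RD / ρt ≤ ∑ t ∈ Icc 1 T₁, ∑ i, lam t i * g t i (x t) := by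
    refine sub_le_of_simplex_regret hρt (G := fun i ↦ ∑ t ∈ Icc 1 T₁, g t i (x t))
      (fun l hl hlsum ↦ ?_) (h3.imp (fun h ↦ by simp [h]) id)
    simp only [mul_sum]
    rw [sum_comm]
    linarith [h2 l hl hlsum]
  have hprimal := h1 ξ
  rw [sum_sub_distrib] at hprimal
  linarith

/-- Play-phase reward bound with adversarial constraints: the primal player secures a
`ρ/(1+ρ)` fraction of the reward of any fixed mixture `ξ*`, plus `T − T₁`. -/
theorem statement11 {X : Type} [MeasurableSpace X] {m : ℕ} (hm : 0 < m)
    (T T₁ : ℕ) (hT₁ : 1 ≤ T₁) (hTT : T₁ ≤ T)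
    (ρt ρ : ℝ) (hρt : 0 < ρt) (hρ : 0 ≤ ρ)
    (x : ℕ → X) (lam : ℕ → Fin m → ℝ)
    -- the dual iterates lie in `D_{ρ̃}`
    (hlam : ∀ t ∈ Finset.Icc 1 T₁, (∀ i, 0 ≤ lam t i) ∧ ∑ i, lam t i ≤ 1 / ρt)
    (f : ℕ → X → ℝ) (g : ℕ → Fin m → X → ℝ)
    (hfm : ∀ t, Measurable (f t)) (hf01 : ∀ t y, f t y ∈ Set.Icc (0:ℝ) 1)
    (hgm : ∀ t i, Measurable (g t i)) (hg1 : ∀ t i y, g t i y ∈ Set.Icc (-1:ℝ) 1)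
    (ξs ξo : ProbabilityMeasure X)
    -- ξ° is strictly feasible by margin ρ for every round's constraints
    (hfeaso : ∀ t ∈ Finset.Icc 1 T, ∀ i, ∫ y, g t i y ∂(ξo : Measure X) ≤ -ρ)
    (RP RD : ℝ) (hRP : 0 ≤ RP) (hRD : 0 ≤ RD)
    -- (i) primal regret bound against every fixed mixture
    (h1 : ∀ ξ : ProbabilityMeasure X,
          ∑ t ∈ Finset.Icc 1 T₁, (f t (x t) - ∑ i, lam t i * g t i (x t)) ≥
          ∑ t ∈ Finset.Icc 1 T₁, ((∫ y, f t y ∂(ξ : Measure X)) -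
            ∑ i, lam t i * ∫ y, g t i y ∂(ξ : Measure X)) - (1 + 2 / ρt) * RP)
    -- (ii) dual regret bound
    (h2 : ∀ l : Fin m → ℝ, (∀ i, 0 ≤ l i) → (∑ i, l i ≤ 1 / ρt) →
          ∑ t ∈ Finset.Icc 1 T₁, ∑ i, lam t i * g t i (x t) ≥
          ∑ t ∈ Finset.Icc 1 T₁, ∑ i, l i * g t i (x t) - RD / ρt)
    -- (iii) stopping condition of the play phase
    (h3 : T₁ = T ∨ ∃ i, ((T : ℝ) - (T₁ : ℝ)) * ρt ≤ ∑ t ∈ Finset.Icc 1 T₁, g t i (x t)) :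
    ∑ t ∈ Finset.Icc 1 T₁, f t (x t) ≥
      (ρ / (1 + ρ)) * ∑ t ∈ Finset.Icc 1 T₁, (∫ y, f t y ∂(ξs : Measure X))
        + ((T : ℝ) - (T₁ : ℝ)) - (1 + 2 / ρt) * RP - RD / ρt :=
  statement11_general T T₁ hTT ρt ρ hρt hρ x lam hlam f g hfm hf01 hgm hg1 ξs ξo hfeaso RP RD h1 h2
    h3
end

section
/- (Recovery-phase violation bound with adversarial constraints.) Let T, T₁ ∈ ℕ with T₁ ≤ T, let ρ ∈ ℝ, and let x_{T₁+1},…,x_T ∈ X, λ_{T₁+1},…,λ_T ∈ Δ_m, constraint functions g_t : X → [−1,1]^m, ξ° ∈ Ξ with g_{t,i}(ξ°) ≤ −ρ for all t and all i ∈ [m], and constants R^P, R^D ≥ 0. Assume: (i) Σ_{t=T₁+1}^{T}(−⟨λ_t,g_t(x_t)⟩) ≥ Σ_{t=T₁+1}^{T}(−⟨λ_t,g_t(ξ°)⟩) − 2·R^P; (ii) for every λ ∈ Δ_m, Σ_{t=T₁+1}^{T}⟨λ_t,g_t(x_t)⟩ ≥ Σ_{t=T₁+1}^{T}⟨λ,g_t(x_t)⟩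 − R^D. Then for every i ∈ [m], Σ_{t=T₁+1}^{T} g_{t,i}(x_t) ≤ −(T − T₁)·ρ + R^D + 2·R^P. -/
open MeasureTheory Finset

theorem sum_mul_le_of_mem_simplex {ι : Type*} [Fintype ι] {l a : ι → ℝ} {c : ℝ}
    (hl0 : ∀ j, 0 ≤ l j) (hl1 : ∑ j, l j = 1) (ha : ∀ j, a j ≤ c) :
    ∑ j, l j * a j ≤ c :=
  calc ∑ j, l j * a j ≤ ∑ j, l j * c :=
        sum_le_sum fun j _ => mul_le_mul_of_nonneg_left (ha j) (hl0 j)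
    _ = c := by rw [← sum_mul, hl1, one_mul]

theorem Nat.cast_card_Icc_succ_left {a b : ℕ} (h : a ≤ b) :
    ((Icc (a + 1) b).card : ℝ) = b - a := by
  rw [Nat.card_Icc, Nat.add_sub_add_right, Nat.cast_sub h]

-- Test the dual regret at the vertex `Pi.single i 1` of the simplex, then chain it with the primal
-- regret against the strictly feasible comparator `v`.
theorem sum_le_of_primal_dual_regret {ι τ : Type*} [Fintype ι] [DecidableEq ι] (s : Finset τ)
    (lam u v : τ → ι → ℝ) {ρ RP RD : ℝ}
    (hlam : ∀ t ∈ s, (∀ j, 0 ≤ lam t j) ∧ ∑ j, lam t j = 1)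
    (hv : ∀ t ∈ s, ∀ j, v t j ≤ -ρ)
    (hprimal : ∑ t ∈ s, ∑ j, lam t j * u t j ≤ ∑ t ∈ s, ∑ j, lam t j * v t j + RP)
    (hdual : ∀ l : ι → ℝ, (∀ j, 0 ≤ l j) → ∑ j, l j = 1 →
      ∑ t ∈ s, ∑ j, l j * u t j - RD ≤ ∑ t ∈ s, ∑ j, lam t j * u t j)
    (i : ι) :
    ∑ t ∈ s, u t i ≤ -(#s * ρ) + RD + RP := by
  have hvertex : ∑ t ∈ s, u t i - RD ≤ ∑ t ∈ s, ∑ j, lam t j * u t j := by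
    simpa [Pi.single_apply] using
      hdual (Pi.single i 1) (fun j => by by_cases j = i <;> simp_all) (by simp)
  have hfeasible : ∑ t ∈ s, ∑ j, lam t j * v t j ≤ -(#s * ρ) :=
    calc ∑ t ∈ s, ∑ j, lam t j * v t j ≤ ∑ t ∈ s, -ρ :=
          sum_le_sum fun t ht => sum_mul_le_of_mem_simplex (hlam t ht).1 (hlam t ht).2 (hv t ht)
      _ = -(#s * ρ) := by rw [sum_const, nsmul_eq_mul, mul_neg]
  linarith

theorem statement12_general {X : Type} [MeasurableSpace X] {m : ℕ}
    (T T₁ : ℕ) (hTT : T₁ ≤ T)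
    (ρ : ℝ)
    (x : ℕ → X) (lam : ℕ → Fin m → ℝ)
    -- the dual iterates lie in the simplex `Δ_m`
    (hlam : ∀ t ∈ Finset.Icc (T₁ + 1) T, (∀ i, 0 ≤ lam t i) ∧ ∑ i, lam t i = 1)
    (g : ℕ → Fin m → X → ℝ)
    (ξo : ProbabilityMeasure X)
    -- ξ° is strictly feasible by margin ρ for every round's constraints
    (hfeaso : ∀ t, ∀ i, ∫ y, g t i y ∂(ξo : Measure X) ≤ -ρ)
    (RP RD : ℝ)
    -- (i) primal regret bound in the recovery phase
    (h1 : ∑ t ∈ Finset.Icc (T₁ + 1) T, (-(∑ i, lam t i * g t i (x t))) ≥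
          ∑ t ∈ Finset.Icc (T₁ + 1) T,
            (-(∑ i, lam t i * ∫ y, g t i y ∂(ξo : Measure X))) - 2 * RP)
    -- (ii) dual regret bound in the recovery phase
    (h2 : ∀ l : Fin m → ℝ, (∀ i, 0 ≤ l i) → (∑ i, l i = 1) →
          ∑ t ∈ Finset.Icc (T₁ + 1) T, ∑ i, lam t i * g t i (x t) ≥
          ∑ t ∈ Finset.Icc (T₁ + 1) T, ∑ i, l i * g t i (x t) - RD) :
    ∀ i, ∑ t ∈ Finset.Icc (T₁ + 1) T, g t i (x t) ≤
      -(((T : ℝ) - (T₁ : ℝ)) * ρ) + RD + 2 * RP := by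
  intro i
  have hprimal : ∑ t ∈ Icc (T₁ + 1) T, ∑ j, lam t j * g t j (x t) ≤
      ∑ t ∈ Icc (T₁ + 1) T, ∑ j, lam t j * ∫ y, g t j y ∂(ξo : Measure X) + 2 * RP := by
    simp only [sum_neg_distrib] at h1
    linarith
  have key := sum_le_of_primal_dual_regret (Icc (T₁ + 1) T) lam (fun t j => g t j (x t))
    (fun t j => ∫ y, g t j y ∂(ξo : Measure X)) hlam (fun t _ => hfeaso t) hprimal h2 i
  rwa [Nat.cast_card_Icc_succ_left hTT] at key

/-- Recovery-phase violation bound with adversarial constraints. -/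
theorem statement12 {X : Type} [MeasurableSpace X] {m : ℕ} (hm : 0 < m)
    (T T₁ : ℕ) (hTT : T₁ ≤ T)
    (ρ : ℝ)
    (x : ℕ → X) (lam : ℕ → Fin m → ℝ)
    -- the dual iterates lie in the simplex `Δ_m`
    (hlam : ∀ t ∈ Finset.Icc (T₁ + 1) T, (∀ i, 0 ≤ lam t i) ∧ ∑ i, lam t i = 1)
    (g : ℕ → Fin m → X → ℝ)
    (hgm : ∀ t i, Measurable (g t i)) (hg1 : ∀ t i y, g t i y ∈ Set.Icc (-1:ℝ) 1)
    (ξo : ProbabilityMeasure X)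
    -- ξ° is strictly feasible by margin ρ for every round's constraints
    (hfeaso : ∀ t, ∀ i, ∫ y, g t i y ∂(ξo : Measure X) ≤ -ρ)
    (RP RD : ℝ) (hRP : 0 ≤ RP) (hRD : 0 ≤ RD)
    -- (i) primal regret bound in the recovery phase
    (h1 : ∑ t ∈ Finset.Icc (T₁ + 1) T, (-(∑ i, lam t i * g t i (x t))) ≥
          ∑ t ∈ Finset.Icc (T₁ + 1) T,
            (-(∑ i, lam t i * ∫ y, g t i y ∂(ξo : Measure X))) - 2 * RP)
    -- (ii) dual regret bound in the recovery phase
    (h2 : ∀ l : Fin m → ℝ, (∀ i, 0 ≤ l i) → (∑ i, l i = 1) →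
          ∑ t ∈ Finset.Icc (T₁ + 1) T, ∑ i, lam t i * g t i (x t) ≥
          ∑ t ∈ Finset.Icc (T₁ + 1) T, ∑ i, l i * g t i (x t) - RD) :
    ∀ i, ∑ t ∈ Finset.Icc (T₁ + 1) T, g t i (x t) ≤
      -(((T : ℝ) - (T₁ : ℝ)) * ρ) + RD + 2 * RP :=
  statement12_general T T₁ hTT ρ x lam hlam g ξo hfeaso RP RD h1 h2
end
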